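/- arXiv:1406.7365 — 13 statements merged into one kernel-verified Lean document; each statement's English description precedes it below -/
import Mathlib

section
/- Let G be a finite group minimally generated by d elements. Then |Aut_c(G)| ≤ |γ₂(G)|^d, where γ₂(G) is the commutator subgroup of G. -/
/-- The group of class-preserving automorphisms of `G`. -/
def autC (G : Type*) [Group G] : Subgroup (MulAut G) where
  carrier := {φ | ∀ x : G, IsConj x (φ x)}
  one_mem' := fun x => IsConj.refl x
  mul_mem' := fun {a b} ha hb x => (hb x).trans (ha (b x))
  inv_mem' := fun {a} ha x => by
    have h := (ha ((a⁻¹ : MulAut _) x)).symm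
    simpa using h

/-! A class-preserving automorphism moves each generator `xᵢ` to `xᵢ [xᵢ, c]` for some `c`,
so it is determined by the tuple of commutators `xᵢ⁻¹ φ(xᵢ) ∈ γ₂(G)`. -/

open scoped commutatorElement

theorem inv_mul_mem_commutator_of_isConj {G : Type*} [Group G] {a b : G} (h : IsConj a b) :
    a⁻¹ * b ∈ commutator G := by
  obtain ⟨c, rfl⟩ := isConj_iff.mp h
  have hcomm : a⁻¹ * (c * a * c⁻¹) = ⁅a⁻¹, c⁆ := by
    rw [commutatorElement_def]; group
  rw [hcomm, commutator_def]
  exact Subgroup.commutator_mem_commutator (Subgroup.mem_top _) (Subgroup.mem_top _)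

theorem MulAut.ext_of_closure_eq_top {G ι : Type*} [Group G] {x : ι → G}
    (hgen : Subgroup.closure (Set.range x) = ⊤) {φ ψ : MulAut G} (h : ∀ i, φ (x i) = ψ (x i)) :
    φ = ψ := by
  have hhom : φ.toMonoidHom = ψ.toMonoidHom :=
    MonoidHom.eq_of_eqOn_dense hgen (by rintro _ ⟨i, rfl⟩; exact h i)
  ext g
  exact DFunLike.congr_fun hhom g

namespace autC

variable {G ι : Type*} [Group G]

def displacement (x : ι → G) (φ : autC G) : ι → commutator G :=
  fun i => ⟨(x i)⁻¹ * (φ : MulAut G) (x i), inv_mul_mem_commutator_of_isConj (φ.2 (x i))⟩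

theorem displacement_injective {x : ι → G} (hgen : Subgroup.closure (Set.range x) = ⊤) :
    Function.Injective (displacement x) := by
  intro φ ψ h
  refine Subtype.ext (MulAut.ext_of_closure_eq_top hgen fun i => ?_)
  simpa [displacement] using congrArg Subtype.val (congrFun h i)

theorem card_le_card_commutator_pow [Finite G] [Fintype ι] {x : ι → G}
    (hgen : Subgroup.closure (Set.range x) = ⊤) :
    Nat.card (autC G) ≤ Nat.card (commutator G) ^ Fintype.card ι := by
  calc Nat.card (autC G) ≤ Nat.card (ι → commutator G) :=
        Nat.card_le_card_of_injective _ (displacement_injective hgen)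
    _ = Nat.card (commutator G) ^ Fintype.card ι := by
        rw [Nat.card_pi, Finset.prod_const, Finset.card_univ]

end autC

theorem stmt_1_general {G : Type*} [Group G] [Finite G] (d : ℕ) (x : Fin d → G)
    (hgen : Subgroup.closure (Set.range x) = ⊤) :
    Nat.card (autC G) ≤ Nat.card (commutator G) ^ d := by
  simpa using autC.card_le_card_commutator_pow hgen

/-- If a finite group `G` is minimally generated by `d` elements, then
`|Aut_c(G)| ≤ |γ₂(G)|^d`. -/
theorem stmt_1 {G : Type*} [Group G] [Finite G] (d : ℕ) (x : Fin d → G)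
    (hgen : Subgroup.closure (Set.range x) = ⊤)
    (hmin : ∀ (e : ℕ) (y : Fin e → G), Subgroup.closure (Set.range y) = ⊤ → d ≤ e) :
    Nat.card (autC G) ≤ Nat.card (commutator G) ^ d :=
  stmt_1_general d x hgen
end

section
/- Let G be a finite p-group. Then |Aut_c(G)| = ∏_{i=1}^{d} |x_i^G| holds for every minimal generating set {x₁, …, x_d} of G if and only if |Aut_c(G)| = |γ₂(G)|^{d(G)}. -/
/-!
If `|Aut_c(G)| = ∏ |x_i^G|` for a generating tuple `x`, evaluation at `x` is a bijection from
`Aut_c(G)` onto the product of the conjugacy classes `x_i^G`, so every tuple of conjugates of the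
`x_i` is the image of `x` under a class-preserving automorphism. Applying this to `x` and to the
generating tuple obtained by replacing `x_b` with `x_a x_b` gives `x_a⁻¹ u w ∈ x_b^G` for all
`u ∈ x_a^G` and `w ∈ x_b^G`. So the left stabilizer `S` of `x_b^G`, a normal subgroup, contains
`x_a⁻¹ x_a^g` for every `g`: all `x_a` with `a ≠ b` are central modulo `S`, hence `G/S` is abelian
and `|γ₂(G)| ≤ |S| ≤ |x_b^G| ≤ |γ₂(G)|`. Conversely `|Aut_c(G)| ≤ ∏ |x_i^G| ≤ |γ₂(G)|^d` holds for
every generating tuple, since `y ↦ y x_i⁻¹` embeds `x_i^G` into `γ₂(G)`.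
-/

open Subgroup Function Set MulAction
open scoped Pointwise commutatorElement

section

variable {G : Type*} [Group G] {ι : Type*}

theorem mul_comm_of_closure_eq_top {s : Set G} (hs : closure s = ⊤)
    (hcomm : ∀ x ∈ s, ∀ y ∈ s, x * y = y * x) (g h : G) : g * h = h * g :=
  have hle := closure_le_centralizer_centralizer s
  Set.centralizer_centralizer_comm_of_comm hcomm g (hle (hs ▸ mem_top g)) h (hle (hs ▸ mem_top h))

theorem commutator_le_of_closure_range_eq_top {N : Subgroup G} [N.Normal] {x : ι → G}
    (hx : closure (range x) = ⊤) (b : ι) (hN : ∀ a ≠ b, ∀ g : G, ⁅g, x a⁆ ∈ N) :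
    commutator G ≤ N := by
  rw [← Normal.quotient_commutative_iff_commutator_le]
  have hgen : closure (range (QuotientGroup.mk' N ∘ x)) = ⊤ := by
    rw [range_comp, ← MonoidHom.map_closure, hx,
      map_top_of_surjective _ (QuotientGroup.mk'_surjective N)]
  have hcentral : ∀ a ≠ b, ∀ q : G ⧸ N,
      q * QuotientGroup.mk' N (x a) = QuotientGroup.mk' N (x a) * q := by
    intro a hab q
    obtain ⟨g, rfl⟩ := QuotientGroup.mk'_surjective N q
    rw [← commutatorElement_eq_one_iff_mul_comm, ← map_commutatorElement,
      QuotientGroup.mk'_apply, QuotientGroup.eq_one_iff]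
    exact hN a hab g
  refine ⟨⟨mul_comm_of_closure_eq_top hgen ?_⟩⟩
  rintro _ ⟨i, rfl⟩ _ ⟨j, rfl⟩
  by_cases hj : j = b
  · by_cases hi : i = b
    · rw [hi, hj]
    · exact (hcentral i hi _).symm
  · exact hcentral j hj _

theorem conj_mem_conjugatesOf_iff {g z : G} (c : G) :
    c * z * c⁻¹ ∈ conjugatesOf g ↔ z ∈ conjugatesOf g :=
  have hz : IsConj z (c * z * c⁻¹) := isConj_iff.2 ⟨c, rfl⟩
  ⟨fun h => h.trans hz.symm, fun h => h.trans hz⟩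

theorem stabilizer_conjugatesOf_normal (g : G) : (stabilizer G (conjugatesOf g)).Normal where
  conj_mem n hn c := by
    rw [mem_stabilizer_set] at hn ⊢
    intro y
    rw [smul_eq_mul, show c * n * c⁻¹ * y = c * (n * (c⁻¹ * y * c⁻¹⁻¹)) * c⁻¹ by group,
      conj_mem_conjugatesOf_iff, ← smul_eq_mul, hn, conj_mem_conjugatesOf_iff]

theorem closure_range_update_mul_eq_top [DecidableEq ι] {x : ι → G}
    (hx : closure (range x) = ⊤) {a b : ι} (hab : a ≠ b) :
    closure (range (update x b (x a * x b))) = ⊤ := by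
  rw [eq_top_iff, ← hx, closure_le]
  rintro _ ⟨i, rfl⟩
  have hmem (j : ι) : update x b (x a * x b) j ∈ closure (range (update x b (x a * x b))) :=
    subset_closure (mem_range_self j)
  rcases eq_or_ne i b with rfl | hib
  · simpa [update_of_ne hab] using mul_mem (inv_mem (hmem a)) (hmem i)
  · simpa [update_of_ne hib] using hmem i

def autCEval (x : ι → G) (φ : autC G) (i : ι) : {y : G // IsConj (x i) y} :=
  ⟨φ.1 (x i), φ.2 (x i)⟩

theorem autCEval_injective {x : ι → G} (hx : closure (range x) = ⊤) :
    Injective (autCEval x) := fun φ ψ h =>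
  Subtype.ext <| MulEquiv.toMonoidHom_injective <| MonoidHom.eq_of_eqOn_dense hx <| by
    rintro _ ⟨i, rfl⟩
    exact congrArg Subtype.val (congrFun h i)

variable [Finite G]

theorem card_conjugatesOf_le_card_commutator (g : G) :
    Nat.card {y : G // IsConj g y} ≤ Nat.card (commutator G) := by
  refine Nat.card_le_card_of_injective
    (fun y => ⟨y.1 * g⁻¹, ?_⟩) fun _ _ h => Subtype.ext (mul_right_cancel (congrArg Subtype.val h))
  obtain ⟨c, hc⟩ := isConj_iff.1 y.2
  rw [← hc, ← commutatorElement_def, commutator_def]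
  exact commutator_mem_commutator (mem_top c) (mem_top g)

theorem card_stabilizer_conjugatesOf_le (g : G) :
    Nat.card (stabilizer G (conjugatesOf g)) ≤ Nat.card {y : G // IsConj g y} :=
  Nat.card_le_card_of_injective
    (fun m => ⟨m.1 * g, (mem_stabilizer_set.1 m.2 g).2 mem_conjugatesOf_self⟩)
    fun _ _ h => Subtype.ext (mul_right_cancel (congrArg Subtype.val h))

variable [Fintype ι]

theorem card_autC_le_prod {x : ι → G} (hx : closure (range x) = ⊤) :
    Nat.card (autC G) ≤ ∏ i, Nat.card {y : G // IsConj (x i) y} := by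
  rw [← Nat.card_pi]
  exact Nat.card_le_card_of_injective _ (autCEval_injective hx)

theorem exists_autC_apply_eq {x : ι → G} (hx : closure (range x) = ⊤)
    (hcard : Nat.card (autC G) = ∏ i, Nat.card {y : G // IsConj (x i) y})
    {z : ι → G} (hz : ∀ i, IsConj (x i) (z i)) : ∃ φ ∈ autC G, ∀ i, φ (x i) = z i := by
  have hbij := (Nat.bijective_iff_injective_and_card (autCEval x)).2
    ⟨autCEval_injective hx, by rw [Nat.card_pi, hcard]⟩
  obtain ⟨φ, hφ⟩ := hbij.2 fun i => ⟨z i, hz i⟩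
  exact ⟨φ, φ.2, fun i => congrArg Subtype.val (congrFun hφ i)⟩

def CardAutCEqProdConjClasses (G ι : Type*) [Group G] [Fintype ι] : Prop :=
  ∀ x : ι → G, closure (range x) = ⊤ →
    Nat.card (autC G) = ∏ i, Nat.card {y : G // IsConj (x i) y}

variable [DecidableEq ι]

theorem isConj_inv_mul_mul
    (H : CardAutCEqProdConjClasses G ι) {x : ι → G} (hx : closure (range x) = ⊤) {a b : ι}
    (hab : a ≠ b) {u w : G} (hu : IsConj (x a) u) (hw : IsConj (x b) w) :
    IsConj (x b) ((x a)⁻¹ * u * w) := by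
  obtain ⟨φ, hφ, hφx⟩ := exists_autC_apply_eq hx (H x hx) (z := update (update x a u) b w) <| by
    intro i
    rcases eq_or_ne i b with rfl | hib
    · simpa using hw
    rcases eq_or_ne i a with rfl | hia
    · simpa [update_of_ne hib] using hu
    · simpa [update_of_ne hib, update_of_ne hia] using IsConj.refl (x i)
  have huw : IsConj (x a * x b) (u * w) := by
    simpa [hφx a, hφx b, update_of_ne hab] using hφ (x a * x b)
  obtain ⟨ψ, hψ, hψx⟩ := exists_autC_apply_eq (closure_range_update_mul_eq_top hx hab)
    (H _ (closure_range_update_mul_eq_top hx hab))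
    (z := update (update x b (x a * x b)) b (u * w)) <| by
    intro i
    rcases eq_or_ne i b with rfl | hib
    · simpa using huw
    · simpa [update_of_ne hib] using IsConj.refl (x i)
  have hψa : ψ (x a) = x a := by simpa [update_of_ne hab] using hψx a
  have hψab : ψ (x a * x b) = u * w := by simpa using hψx b
  have hψb : ψ (x b) = (x a)⁻¹ * u * w := by
    rw [map_mul, hψa] at hψab
    rw [mul_assoc, ← hψab, inv_mul_cancel_left]
  exact hψb ▸ hψ (x b)

theorem inv_mul_mem_stabilizer_conjugatesOf
    (H : CardAutCEqProdConjClasses G ι) {x : ι → G} (hx : closure (range x) = ⊤) {a b : ι}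
    (hab : a ≠ b) {u : G} (hu : IsConj (x a) u) :
    (x a)⁻¹ * u ∈ stabilizer G (conjugatesOf (x b)) := by
  rw [mem_stabilizer_set_iff_smul_set_subset (toFinite _)]
  rintro _ ⟨w, hw, rfl⟩
  show (x a)⁻¹ * u * w ∈ _
  exact isConj_inv_mul_mul H hx hab hu hw

theorem commutator_le_stabilizer_conjugatesOf
    (H : CardAutCEqProdConjClasses G ι) {x : ι → G} (hx : closure (range x) = ⊤) (b : ι) :
    commutator G ≤ stabilizer G (conjugatesOf (x b)) := by
  have hN := stabilizer_conjugatesOf_normal (x b)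
  refine commutator_le_of_closure_range_eq_top hx b fun a hab g => ?_
  rw [commutatorElement_def]
  exact hN.mem_comm (inv_mul_mem_stabilizer_conjugatesOf H hx hab (isConj_iff.2 ⟨g, rfl⟩))

theorem card_conjugatesOf_eq_card_commutator
    (H : CardAutCEqProdConjClasses G ι) {x : ι → G} (hx : closure (range x) = ⊤) (b : ι) :
    Nat.card {y : G // IsConj (x b) y} = Nat.card (commutator G) :=
  (card_conjugatesOf_le_card_commutator _).antisymm <|
    (card_le_of_le (commutator_le_stabilizer_conjugatesOf H hx b)).trans
      (card_stabilizer_conjugatesOf_le _)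

end

theorem Group.exists_closure_range_eq_top_fin_rank (G : Type*) [Group G] [Group.FG G] :
    ∃ x : Fin (Group.rank G) → G, closure (range x) = ⊤ := by
  obtain ⟨S, hS, hgen⟩ := Group.rank_spec G
  refine ⟨(↑) ∘ (S.equivFinOfCardEq hS).symm, ?_⟩
  rwa [range_comp, Equiv.range_eq_univ, image_univ, Subtype.range_coe]

theorem stmt_2_general {G : Type*} [Group G] [Finite G] :
    (∀ x : Fin (Group.rank G) → G, Subgroup.closure (Set.range x) = ⊤ →
        Nat.card (autC G) = ∏ i, Nat.card {y : G // IsConj (x i) y}) ↔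
      Nat.card (autC G) = Nat.card (commutator G) ^ Group.rank G := by
  refine ⟨fun H => ?_, fun h x hx => ?_⟩
  · obtain ⟨x, hx⟩ := Group.exists_closure_range_eq_top_fin_rank G
    rw [H x hx, Finset.prod_congr rfl fun i _ => card_conjugatesOf_eq_card_commutator H hx i,
      Finset.prod_const, Finset.card_fin]
  · refine (card_autC_le_prod hx).antisymm ?_
    calc ∏ i, Nat.card {y : G // IsConj (x i) y}
        ≤ Nat.card (commutator G) ^ Group.rank G := by
          simpa only [Finset.card_univ, Fintype.card_fin] using
            Finset.prod_le_pow_card Finset.univ _ _ fun i _ =>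
              card_conjugatesOf_le_card_commutator (x i)
      _ = Nat.card (autC G) := h.symm

/-- For a finite p-group `G`, equality `|Aut_c(G)| = ∏ |x_i^G|` holds for every minimal
generating set `{x₁, …, x_d}` of `G` iff `|Aut_c(G)| = |γ₂(G)|^{d(G)}`. A minimal
generating set is a generating set of size `d(G) = Group.rank G`. -/
theorem stmt_2 {p : ℕ} {G : Type*} [Group G] [Finite G] (hp : p.Prime) (hpG : IsPGroup p G) :
    (∀ x : Fin (Group.rank G) → G, Subgroup.closure (Set.range x) = ⊤ →
        Nat.card (autC G) = ∏ i, Nat.card {y : G // IsConj (x i) y}) ↔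
      Nat.card (autC G) = Nat.card (commutator G) ^ Group.rank G :=
  stmt_2_general
end

section
/- Let G be a finite Camina-type group and let N be a normal subgroup of G with N ≤ γ₂(G). Then G/N is also a Camina-type group. -/
/-- A finite group `G` is Camina-type if `[x, G] = γ₂(G)` for all `x ∈ G - Φ(G)`,
where `[x, G] = {x⁻¹g⁻¹xg : g ∈ G}`. -/
def IsCaminaType (G : Type*) [Group G] : Prop :=
  ∀ x : G, x ∉ frattini G →
    {z : G | ∃ g : G, z = x⁻¹ * g⁻¹ * x * g} = (commutator G : Set G)

section Surjective

variable {G H : Type*} [Group G] [Group H] {f : G →* H}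

lemma map_commutator_eq_of_surjective (hf : Function.Surjective f) :
    (commutator G).map f = commutator H := by
  rw [map_commutator_eq, MonoidHom.range_eq_top.mpr hf, commutator_def]

lemma image_commutatorsWith_of_surjective (hf : Function.Surjective f) (x : G) :
    f '' {z : G | ∃ g : G, z = x⁻¹ * g⁻¹ * x * g} =
      {z : H | ∃ h : H, z = (f x)⁻¹ * h⁻¹ * f x * h} := by
  ext z
  constructor
  · rintro ⟨_, ⟨g, rfl⟩, rfl⟩
    exact ⟨f g, by simp⟩
  · rintro ⟨h, rfl⟩
    obtain ⟨g, rfl⟩ := hf h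
    exact ⟨_, ⟨g, rfl⟩, by simp⟩

theorem IsCaminaType.of_surjective (hG : IsCaminaType G) (hf : Function.Surjective f) :
    IsCaminaType H := by
  intro y hy
  obtain ⟨x, rfl⟩ := hf y
  have hx : x ∉ frattini G := fun h => hy (frattini_le_comap_frattini_of_surjective hf h)
  rw [← image_commutatorsWith_of_surjective hf, hG x hx, ← Subgroup.coe_map,
    map_commutator_eq_of_surjective hf]

end Surjective

theorem stmt_5_general {G : Type*} [Group G] (hG : IsCaminaType G)
    (N : Subgroup G) [N.Normal] :
    IsCaminaType (G ⧸ N) :=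
  hG.of_surjective (QuotientGroup.mk'_surjective N)

/-- If `G` is a finite (non-abelian) Camina-type group and `N ≤ γ₂(G)` is normal in `G`,
then `G/N` is also Camina-type. -/
theorem stmt_5 {G : Type*} [Group G] [Finite G]
    (hna : ¬ ∀ a b : G, a * b = b * a) (hG : IsCaminaType G)
    (N : Subgroup G) [N.Normal] (hN : N ≤ commutator G) :
    IsCaminaType (G ⧸ N) :=
  stmt_5_general hG N
end

section
/- Every finite nilpotent Camina-type group is a p-group for some prime p. -/
section

variable {G : Type*} [Group G]

theorem IsCaminaType.commutator_le_of_not_le_frattini (hG : IsCaminaType G) {N : Subgroup G}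
    [hN : N.Normal] (hNΦ : ¬ N ≤ frattini G) : commutator G ≤ N := by
  obtain ⟨y, hyN, hyΦ⟩ := SetLike.not_le_iff_exists.mp hNΦ
  intro z hz
  rw [← SetLike.mem_coe, ← hG y hyΦ] at hz
  obtain ⟨g, rfl⟩ := hz
  have hconj : g⁻¹ * y * g ∈ N := by simpa using hN.conj_mem y hyN g⁻¹
  simpa only [mul_assoc] using mul_mem (inv_mem hyN) hconj

/-- A normal Hall subgroup has a complement `H` (Schur–Zassenhaus); if it lay in `Φ(G)`, then
`H ⊔ Φ(G) = G` would force `H = G` since `Φ(G)` consists of non-generators. -/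
theorem Subgroup.not_le_frattini_of_coprime [IsCoatomic (Subgroup G)] {N : Subgroup G}
    [N.Normal] (hN : (Nat.card N).Coprime N.index) (hN_ne : N ≠ ⊥) : ¬ N ≤ frattini G := by
  intro hNΦ
  obtain ⟨H, hH⟩ := exists_right_complement'_of_coprime hN
  have hH_top : H = ⊤ :=
    frattini_nongenerating (top_le_iff.mp (hH.sup_eq_top ▸ sup_comm N H ▸ sup_le_sup_left hNΦ H))
  exact hN_ne (disjoint_top.mp (hH_top ▸ hH.disjoint))

theorem IsCaminaType.commutator_le_sylow [Finite G] [Group.IsNilpotent G] (hG : IsCaminaType G)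
    {p : ℕ} [Fact p.Prime] (hp : p ∣ Nat.card G) (P : Sylow p G) :
    commutator G ≤ (P : Subgroup G) :=
  hG.commutator_le_of_not_le_frattini <|
    Subgroup.not_le_frattini_of_coprime P.card_coprime_index (P.ne_bot_of_dvd_card hp)

theorem IsCaminaType.commutator_eq_bot_of_two_primes [Finite G] [Group.IsNilpotent G]
    (hG : IsCaminaType G) {p q : ℕ} (hp : p.Prime) (hq : q.Prime) (hpq : p ≠ q)
    (hpG : p ∣ Nat.card G) (hqG : q ∣ Nat.card G) : commutator G = ⊥ := by
  have : Fact p.Prime := ⟨hp⟩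
  have : Fact q.Prime := ⟨hq⟩
  obtain ⟨P⟩ : Nonempty (Sylow p G) := inferInstance
  obtain ⟨Q⟩ : Nonempty (Sylow q G) := inferInstance
  have hPQ : Disjoint (P : Subgroup G) Q := IsPGroup.disjoint_of_ne p q hpq _ _ P.2 Q.2
  exact le_bot_iff.mp <|
    (le_inf (hG.commutator_le_sylow hpG P) (hG.commutator_le_sylow hqG Q)).trans hPQ.le_bot

end

/-- Every finite nilpotent (non-abelian) Camina-type group is a p-group for some prime p. -/
theorem stmt_6 {G : Type*} [Group G] [Finite G] [Group.IsNilpotent G]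
    (hna : ¬ ∀ a b : G, a * b = b * a) (hG : IsCaminaType G) :
    ∃ p : ℕ, p.Prime ∧ IsPGroup p G := by
  have hcomm : commutator G ≠ ⊥ := fun h =>
    hna ((commutator_eq_bot_iff G).mp h).is_comm.comm
  have hcard : Nat.card G ≠ 1 := fun h =>
    hna fun a b => (Nat.card_eq_one_iff_unique.mp h).1.elim _ _
  set p := (Nat.card G).minFac
  have hp : p.Prime := Nat.minFac_prime hcard
  refine ⟨p, hp, IsPGroup.of_card (Nat.eq_prime_pow_of_unique_prime_dvd Nat.card_pos.ne' ?_)⟩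
  intro q hq hqG
  by_contra hqp
  exact hcomm (hG.commutator_eq_bot_of_two_primes hq hp hqp hqG (Nat.minFac_dvd _))
end

section
/- Let G be a finite nilpotent group of class 2. Then the map φ ↦ f_φ, where f_φ(g·Z(G)) = g⁻¹φ(g), is an isomorphism of the group Aut_c(G) onto the group Hom_c(G/Z(G), γ₂(G)) = { f ∈ Hom(G/Z(G), γ₂(G)) : f(g·Z(G)) ∈ [g,G] for all g ∈ G }. -/
open Subgroup

open scoped commutatorElement

theorem commutator_le_center_of_nilpotencyClass_le_two {G : Type*} [Group G]
    [Group.IsNilpotent G] (h : Group.nilpotencyClass G ≤ 2) : commutator G ≤ center G := by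
  rw [← commutator_top_right_eq_bot_iff_le_center, ← top_lowerCentralSeries_one,
    ← Subgroup.lowerCentralSeries_succ]
  exact Subgroup.lowerCentralSeries_eq_bot_iff_nilpotencyClass_le.mpr h

section ClassPreserving

variable {G : Type*} [Group G] {φ : MulAut G}

theorem exists_inv_mul_apply_eq_of_mem_autC (hφ : φ ∈ autC G) (g : G) :
    ∃ h : G, g⁻¹ * φ g = g⁻¹ * h⁻¹ * g * h := by
  obtain ⟨c, hc⟩ := isConj_iff.mp (hφ g)
  exact ⟨c⁻¹, by rw [← hc]; group⟩

theorem inv_mul_apply_mem_commutator_of_mem_autC (hφ : φ ∈ autC G) (g : G) :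
    g⁻¹ * φ g ∈ commutator G := by
  obtain ⟨h, hh⟩ := exists_inv_mul_apply_eq_of_mem_autC hφ g
  rw [hh, show g⁻¹ * h⁻¹ * g * h = ⁅g⁻¹, h⁻¹⁆ by simp [commutatorElement_def]]
  exact commutator_mem_commutator (mem_top _) (mem_top _)

theorem apply_eq_self_of_mem_autC_of_mem_center (hφ : φ ∈ autC G) {z : G}
    (hz : z ∈ center G) : φ z = z := by
  obtain ⟨c, hc⟩ := isConj_iff.mp (hφ z)
  rw [← hc, (mem_center_iff.mp hz) c, mul_inv_cancel_right]

end ClassPreserving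

section InvMulApply

variable {G : Type*} [Group G]

def invMulApplyHom (σ : G →* G) (hσ : ∀ g, g⁻¹ * σ g ∈ center G) : G →* G where
  toFun g := g⁻¹ * σ g
  map_one' := by simp
  map_mul' g h := by
    simp only [map_mul, mul_inv_rev]
    calc h⁻¹ * g⁻¹ * (σ g * σ h) = h⁻¹ * (g⁻¹ * σ g) * σ h := by group
      _ = g⁻¹ * σ g * h⁻¹ * σ h := by rw [(mem_center_iff.mp (hσ g)) h⁻¹]
      _ = g⁻¹ * σ g * (h⁻¹ * σ h) := mul_assoc _ _ _

variable (hG : commutator G ≤ center G)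

def autCToHom (φ : autC G) : G ⧸ center G →* G :=
  QuotientGroup.lift (center G)
    (invMulApplyHom (φ : MulAut G).toMonoidHom
      fun g => hG (inv_mul_apply_mem_commutator_of_mem_autC φ.2 g))
    fun z hz => by
      change z⁻¹ * (φ : MulAut G) z = 1
      rw [apply_eq_self_of_mem_autC_of_mem_center φ.2 hz, inv_mul_cancel]

@[simp]
theorem autCToHom_mk (φ : autC G) (g : G) :
    autCToHom hG φ g = g⁻¹ * (φ : MulAut G) g :=
  rfl

theorem autCToHom_mul (φ ψ : autC G) (g : G) :
    autCToHom hG (φ * ψ) g = autCToHom hG φ g * autCToHom hG ψ g := by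
  have hψ : g⁻¹ * (ψ : MulAut G) g ∈ center G :=
    hG (inv_mul_apply_mem_commutator_of_mem_autC ψ.2 g)
  have hφψ : ((φ * ψ : autC G) : MulAut G) g = (φ : MulAut G) g * (g⁻¹ * (ψ : MulAut G) g) :=
    calc ((φ * ψ : autC G) : MulAut G) g = (φ : MulAut G) (g * (g⁻¹ * (ψ : MulAut G) g)) := by
          rw [mul_inv_cancel_left]; rfl
      _ = (φ : MulAut G) g * (g⁻¹ * (ψ : MulAut G) g) := by
          rw [map_mul, apply_eq_self_of_mem_autC_of_mem_center φ.2 hψ]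
  simp only [autCToHom_mk, hφψ, mul_assoc]

end InvMulApply

section OfCentralHom

variable {G : Type*} [Group G]

def mulAutOfCentralHom (f : G ⧸ center G →* G) (hf : ∀ g : G, f g ∈ center G) : MulAut G where
  toFun g := g * f g
  invFun g := g * (f g)⁻¹
  left_inv g := by
    simp only [QuotientGroup.mk_mul_of_mem _ (hf g), mul_inv_cancel_right]
  right_inv g := by
    simp only [QuotientGroup.mk_mul_of_mem _ (inv_mem (hf g)), inv_mul_cancel_right]
  map_mul' g h := by
    simp only [QuotientGroup.mk_mul, map_mul]
    rw [mul_assoc g h, ← mul_assoc h, (mem_center_iff.mp (hf g)) h]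
    group

theorem mulAutOfCentralHom_mem_autC (f : G ⧸ center G →* G) (hf : ∀ g : G, f g ∈ center G)
    (hfc : ∀ g : G, ∃ h : G, f g = g⁻¹ * h⁻¹ * g * h) : mulAutOfCentralHom f hf ∈ autC G := by
  intro g
  obtain ⟨h, hh⟩ := hfc g
  refine isConj_iff.mpr ⟨h⁻¹, ?_⟩
  change h⁻¹ * g * h⁻¹⁻¹ = g * f g
  rw [hh]
  group

end OfCentralHom

theorem stmt_7_general {G : Type*} [Group G] [Group.IsNilpotent G]
    (hcl : Group.nilpotencyClass G = 2) :
    ∃ e : autC G ≃ {f : G ⧸ Subgroup.center G →* G //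
        ∀ g : G, f (g : G ⧸ Subgroup.center G) ∈ commutator G ∧
          f (g : G ⧸ Subgroup.center G) ∈ {z : G | ∃ h : G, z = g⁻¹ * h⁻¹ * g * h}},
      (∀ (φ : autC G) (g : G),
          ((e φ : {f : G ⧸ Subgroup.center G →* G // _}) : G ⧸ Subgroup.center G →* G)
              (g : G ⧸ Subgroup.center G) = g⁻¹ * (φ : MulAut G) g) ∧
      ∀ (φ ψ : autC G) (g : G),
        ((e (φ * ψ) : _) : G ⧸ Subgroup.center G →* G) (g : G ⧸ Subgroup.center G) =
          ((e φ : _) : G ⧸ Subgroup.center G →* G) (g : G ⧸ Subgroup.center G) *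
            ((e ψ : _) : G ⧸ Subgroup.center G →* G) (g : G ⧸ Subgroup.center G) := by
  have hG := commutator_le_center_of_nilpotencyClass_le_two hcl.le
  refine ⟨{
    toFun := fun φ => ⟨autCToHom hG φ, fun g =>
      ⟨inv_mul_apply_mem_commutator_of_mem_autC φ.2 g, exists_inv_mul_apply_eq_of_mem_autC φ.2 g⟩⟩
    invFun := fun f => ⟨mulAutOfCentralHom f.1 (fun g => hG (f.2 g).1),
      mulAutOfCentralHom_mem_autC _ _ fun g => (f.2 g).2⟩
    left_inv := fun φ => Subtype.ext (MulEquiv.ext fun g => mul_inv_cancel_left g _)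
    right_inv := fun f => Subtype.ext (QuotientGroup.monoidHom_ext _
      (MonoidHom.ext fun g => inv_mul_cancel_left g _)) },
    fun φ g => rfl, fun φ ψ g => autCToHom_mul hG φ ψ g⟩

/-- For a finite nilpotent group `G` of class 2, the map `φ ↦ f_φ`, where
`f_φ(g·Z(G)) = g⁻¹φ(g)`, is an isomorphism of `Aut_c(G)` onto
`Hom_c(G/Z(G), γ₂(G)) = {f ∈ Hom(G/Z(G), γ₂(G)) : f(g·Z(G)) ∈ [g,G] for all g}`
(where the group structure on the latter is pointwise multiplication). -/
theorem stmt_7 {G : Type*} [Group G] [Finite G] [Group.IsNilpotent G]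
    (hcl : Group.nilpotencyClass G = 2) :
    ∃ e : autC G ≃ {f : G ⧸ Subgroup.center G →* G //
        ∀ g : G, f (g : G ⧸ Subgroup.center G) ∈ commutator G ∧
          f (g : G ⧸ Subgroup.center G) ∈ {z : G | ∃ h : G, z = g⁻¹ * h⁻¹ * g * h}},
      (∀ (φ : autC G) (g : G),
          ((e φ : {f : G ⧸ Subgroup.center G →* G // _}) : G ⧸ Subgroup.center G →* G)
              (g : G ⧸ Subgroup.center G) = g⁻¹ * (φ : MulAut G) g) ∧
      ∀ (φ ψ : autC G) (g : G),
        ((e (φ * ψ) : _) : G ⧸ Subgroup.center G →* G) (g : G ⧸ Subgroup.center G) =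
          ((e φ : _) : G ⧸ Subgroup.center G →* G) (g : G ⧸ Subgroup.center G) *
            ((e ψ : _) : G ⧸ Subgroup.center G →* G) (g : G ⧸ Subgroup.center G) :=
  stmt_7_general hcl
end

section
/- Let G be a Camina-type finite p-group of nilpotency class 2. Then G/Z(G) is homocyclic, i.e., a direct product of cyclic groups of the same order. -/
open Subgroup
open scoped commutatorElement

theorem frattini_eq_bot_of_prime_card (C : Type*) [Group C] [Fact (Nat.card C).Prime] :
    frattini C = ⊥ := by
  have hC : (Nat.card C).Prime := Fact.out
  have : Finite C := Nat.finite_of_card_ne_zero hC.ne_zero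
  have : Nontrivial C := Finite.one_lt_card_iff_nontrivial.mp hC.one_lt
  refine le_bot_iff.mp (frattini_le_coatom ⟨bot_ne_top, fun H hH => ?_⟩)
  exact H.eq_bot_or_eq_top_of_prime_card.resolve_left hH.ne'

theorem Pi.mulSingle_ofAdd_one_notMem_frattini {ι : Type*} [DecidableEq ι] {n : ι → ℕ}
    {i : ι} (hn : 1 < n i) :
    Pi.mulSingle i (Multiplicative.ofAdd (1 : ZMod (n i))) ∉
      frattini ((j : ι) → Multiplicative (ZMod (n j))) := by
  obtain ⟨q, hq, hqn⟩ := Nat.exists_prime_and_dvd hn.ne'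
  have : Fact q.Prime := ⟨hq⟩
  have : Fact (Nat.card (Multiplicative (ZMod q))).Prime := by simpa using this
  let φ := (ZMod.castHom hqn (ZMod q)).toAddMonoidHom.toMultiplicative.comp
    (Pi.evalMonoidHom (fun j => Multiplicative (ZMod (n j))) i)
  have hφ : Function.Surjective φ :=
    (ZMod.castHom_surjective hqn).comp (Function.surjective_eval i)
  intro h
  have := frattini_le_comap_frattini_of_surjective hφ h
  rw [frattini_eq_bot_of_prime_card, mem_comap, mem_bot] at this
  simp [φ, ZMod.cast_one hqn] at this

theorem CommGroup.exists_mulEquiv_pi_zmod_of_orderOf_eq {A : Type*} [CommGroup A] [Finite A]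
    {m : ℕ} (h : ∀ a : A, a ∉ frattini A → orderOf a = m) :
    ∃ n : ℕ, Nonempty (A ≃* Multiplicative (Fin n → ZMod m)) := by
  classical
  obtain ⟨ι, _, n, hn, ⟨f⟩⟩ := CommGroup.equiv_prod_multiplicative_zmod_of_finite A
  obtain rfl : n = fun _ => m := funext fun i => by
    let a := f.symm (Pi.mulSingle i (Multiplicative.ofAdd 1))
    have ha : a ∉ frattini A := fun ha => Pi.mulSingle_ofAdd_one_notMem_frattini (hn i) <| by
      simpa [a] using
        frattini_le_comap_frattini_of_surjective (φ := f.toMonoidHom) f.surjective ha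
    rw [← h a ha, MulEquiv.orderOf_eq, orderOf_piMulSingle, orderOf_ofAdd_eq_addOrderOf,
      ZMod.addOrderOf_one]
  exact ⟨Fintype.card ι,
    ⟨f.trans <| (MulEquiv.arrowCongr (Fintype.equivFin ι) (.refl _)).trans
      (MulEquiv.piMultiplicative _).symm⟩⟩

section ClassTwo

variable {G : Type*} [Group G] (hG : commutator G ≤ center G)
include hG

theorem inv_mul_pow_mul_eq_pow_mul_pow (x g : G) (n : ℕ) :
    g⁻¹ * x ^ n * g = x ^ n * (x⁻¹ * g⁻¹ * x * g) ^ n := by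
  have hc : x⁻¹ * g⁻¹ * x * g ∈ center G := by
    refine hG ?_
    rw [show x⁻¹ * g⁻¹ * x * g = ⁅x⁻¹, g⁻¹⁆ by group, _root_.commutator_def]
    exact commutator_mem_commutator (mem_top _) (mem_top _)
  calc g⁻¹ * x ^ n * g = (g⁻¹ * x * g⁻¹⁻¹) ^ n := by rw [conj_pow, inv_inv]
    _ = (x * (x⁻¹ * g⁻¹ * x * g)) ^ n := by group
    _ = x ^ n * (x⁻¹ * g⁻¹ * x * g) ^ n := Commute.mul_pow (mem_center_iff.mp hc x) n

theorem pow_mem_center_iff (x : G) (n : ℕ) :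
    x ^ n ∈ center G ↔ ∀ g : G, (x⁻¹ * g⁻¹ * x * g) ^ n = 1 := by
  refine mem_center_iff.trans <| forall_congr' fun g => ?_
  rw [eq_comm, ← inv_mul_eq_iff_eq_mul, ← mul_assoc, inv_mul_pow_mul_eq_pow_mul_pow hG,
    mul_eq_left]

theorem orderOf_mk_center_eq_exponent {x : G}
    (hx : {z : G | ∃ g : G, z = x⁻¹ * g⁻¹ * x * g} = (commutator G : Set G)) :
    orderOf (x : G ⧸ center G) = Monoid.exponent (commutator G) := by
  refine Nat.dvd_right_iff_eq.mp fun n => ?_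
  rw [orderOf_dvd_iff_pow_eq_one, ← QuotientGroup.mk_pow, QuotientGroup.eq_one_iff,
    pow_mem_center_iff hG, Monoid.exponent_dvd_iff_forall_pow_eq_one, Subtype.forall]
  simp only [Subtype.ext_iff, SubmonoidClass.mk_pow, OneMemClass.coe_one, ← SetLike.mem_coe,
    ← hx, Set.mem_ofPred_eq, forall_exists_index, forall_eq_apply_imp_iff]

end ClassTwo

open scoped IsMulCommutative in
theorem stmt_8_general {p : ℕ} {G : Type*} [Group G] [Finite G] (hp : p.Prime) (hpG : IsPGroup p G)
    (hG : IsCaminaType G)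
    (hcl2' : (⊤ : Subgroup G).lowerCentralSeries 2 = ⊥) :
    ∃ n e : ℕ,
      Nonempty ((G ⧸ Subgroup.center G) ≃* Multiplicative (Fin n → ZMod (p ^ e))) := by
  have hcl : commutator G ≤ center G := by
    rwa [← centralizer_univ, ← coe_top, ← commutator_eq_bot_iff_le_centralizer]
  have : IsMulCommutative (G ⧸ center G) := Normal.quotient_commutative_iff_commutator_le.mpr hcl
  obtain ⟨n, hn⟩ := CommGroup.exists_mulEquiv_pi_zmod_of_orderOf_eq
    (m := Monoid.exponent (commutator G)) fun a ha => by
      induction a using QuotientGroup.induction_on with | H x => ?_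
      exact orderOf_mk_center_eq_exponent hcl <| hG x fun hx => ha <|
        frattini_le_comap_frattini_of_surjective (QuotientGroup.mk'_surjective _) hx
  have : Fact p.Prime := ⟨hp⟩
  obtain ⟨e, he⟩ := (hpG.to_subgroup (commutator G)).exists_exponent_eq_pow
  exact ⟨n, e, he ▸ hn⟩

/-- If `G` is a Camina-type finite p-group of nilpotency class 2, then `G/Z(G)` is
homocyclic, i.e. a direct product of cyclic groups of the same order `p^e`. -/
theorem stmt_8 {p : ℕ} {G : Type*} [Group G] [Finite G] (hp : p.Prime) (hpG : IsPGroup p G)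
    (hG : IsCaminaType G)
    (hcl2 : (⊤ : Subgroup G).lowerCentralSeries 1 ≠ ⊥) (hcl2' : (⊤ : Subgroup G).lowerCentralSeries 2 = ⊥) :
    ∃ n e : ℕ,
      Nonempty ((G ⧸ Subgroup.center G) ≃* Multiplicative (Fin n → ZMod (p ^ e))) :=
  stmt_8_general hp hpG hG hcl2'
end

section
/- Let G be a Camina-type finite p-group of nilpotency class 3 with |γ₃(G)| = p. Then (γ₂(G))^p ≤ Z(G), i.e., the subgroup generated by p-th powers of elements of the commutator subgroup is central. -/
open scoped commutatorElement

theorem commutatorElement_pow_left_of_commute {G : Type*} [Group G] {h g : G}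
    (hc : Commute ⁅h, g⁆ h) (n : ℕ) : ⁅h ^ n, g⁆ = ⁅h, g⁆ ^ n := by
  induction n with
  | zero => simp
  | succ n ih =>
    rw [pow_succ', commutatorElement_mul_left_eq_conj_mul, ih,
      (hc.pow_left n).symm.mul_inv_cancel, pow_succ]

namespace Subgroup

variable {G : Type*} [Group G] {n : ℕ}

theorem lowerCentralSeries_le_center (hn : (⊤ : Subgroup G).lowerCentralSeries (n + 1) = ⊥) :
    (⊤ : Subgroup G).lowerCentralSeries n ≤ center G := by
  intro x hx
  rw [mem_center_iff]
  intro g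
  have hxg : ⁅x, g⁆ ∈ (⊤ : Subgroup G).lowerCentralSeries (n + 1) :=
    lowerCentralSeries_isDescendingCentralSeries.2 x n hx g
  rw [hn, mem_bot, commutatorElement_eq_one_iff_commute] at hxg
  exact hxg.symm.eq

theorem pow_card_lowerCentralSeries_mem_center
    (hn : (⊤ : Subgroup G).lowerCentralSeries (n + 2) = ⊥) {h : G}
    (hh : h ∈ (⊤ : Subgroup G).lowerCentralSeries n) :
    h ^ Nat.card ((⊤ : Subgroup G).lowerCentralSeries (n + 1)) ∈ center G := by
  rw [mem_center_iff]
  intro g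
  have hc : ⁅h, g⁆ ∈ (⊤ : Subgroup G).lowerCentralSeries (n + 1) :=
    lowerCentralSeries_isDescendingCentralSeries.2 h n hh g
  have hc_comm : Commute ⁅h, g⁆ h :=
    (mem_center_iff.mp (lowerCentralSeries_le_center hn hc) h).symm
  have hpow : ⁅h ^ Nat.card ((⊤ : Subgroup G).lowerCentralSeries (n + 1)), g⁆ = 1 := by
    rw [commutatorElement_pow_left_of_commute hc_comm]
    exact congrArg Subtype.val (pow_card_eq_one' (x := (⟨⁅h, g⁆, hc⟩ :
      (⊤ : Subgroup G).lowerCentralSeries (n + 1))))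
  exact (commutatorElement_eq_one_iff_commute.mp hpow).symm.eq

end Subgroup

theorem stmt_9_general {p : ℕ} {G : Type*} [Group G]
    (hcl3 : (⊤ : Subgroup G).lowerCentralSeries 3 = ⊥) (hcard : Nat.card ((⊤ : Subgroup G).lowerCentralSeries 2) = p) :
    Subgroup.closure {z : G | ∃ h ∈ commutator G, z = h ^ p} ≤ Subgroup.center G := by
  rw [Subgroup.closure_le]
  rintro _ ⟨h, hh, rfl⟩
  rw [← hcard]
  exact Subgroup.pow_card_lowerCentralSeries_mem_center hcl3 hh

/-- If `G` is a Camina-type finite p-group of nilpotency class 3 with `|γ₃(G)| = p`, then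
the subgroup generated by p-th powers of elements of `γ₂(G)` is contained in `Z(G)`. -/
theorem stmt_9 {p : ℕ} {G : Type*} [Group G] [Finite G] (hp : p.Prime) (hpG : IsPGroup p G)
    (hG : IsCaminaType G)
    (hcl3 : (⊤ : Subgroup G).lowerCentralSeries 3 = ⊥) (hcard : Nat.card ((⊤ : Subgroup G).lowerCentralSeries 2) = p) :
    Subgroup.closure {z : G | ∃ h ∈ commutator G, z = h ^ p} ≤ Subgroup.center G :=
  stmt_9_general hcl3 hcard
end

section
/- Let G be a Camina-type finite p-group of nilpotency class 3 with |γ₃(G)| = p. Then the second center Z₂(G) equals the Frattini subgroup Φ(G). -/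
open scoped commutatorElement

theorem Order.radical_submodule_eq_jacobson (R M : Type*) [Ring R] [AddCommGroup M] [Module R M] :
    Order.radical (Submodule R M) = Module.jacobson R M :=
  sInf_eq_iInf.symm

theorem frattini_eq_bot_of_forall_pow_eq_one {p : ℕ} {Q : Type*} [CommGroup Q] (hp : p.Prime)
    (hexp : ∀ a : Q, a ^ p = 1) : frattini Q = ⊥ := by
  have := Fact.mk hp
  have : Module (ZMod p) (Additive Q) := AddCommGroup.zmodModule hexp
  let e : Subgroup Q ≃o Submodule (ZMod p) (Additive Q) :=
    Subgroup.toAddSubgroup.trans (AddSubgroup.toZModSubmodule p)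
  refine e.injective ?_
  rw [e.map_bot, ← IsSemisimpleModule.jacobson_eq_bot (ZMod p) (Additive Q),
    ← Order.radical_submodule_eq_jacobson]
  exact e.map_radical

namespace Subgroup

variable {G : Type*} [Group G]

open scoped IsMulCommutative in
theorem frattini_le_of_commutator_le_of_forall_pow_mem {p : ℕ} (hp : p.Prime) {N : Subgroup G} [N.Normal]
    (hcomm : _root_.commutator G ≤ N) (hpow : ∀ x : G, x ^ p ∈ N) : frattini G ≤ N := by
  have : IsMulCommutative (G ⧸ N) := Normal.quotient_commutative_iff_commutator_le.mpr hcomm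
  have hQ : frattini (G ⧸ N) = ⊥ := frattini_eq_bot_of_forall_pow_eq_one hp fun a => by
    induction a using QuotientGroup.induction_on
    rw [← QuotientGroup.mk_pow, QuotientGroup.eq_one_iff]
    exact hpow _
  simpa [hQ] using frattini_le_comap_frattini_of_surjective (QuotientGroup.mk'_surjective N)

theorem commutatorElement_pow_left_of_commute {x y : G} (h : Commute ⁅x, y⁆ x) (n : ℕ) :
    ⁅x ^ n, y⁆ = ⁅x, y⁆ ^ n := by
  induction n with
  | zero => simp
  | succ n ih =>
    calc ⁅x ^ (n + 1), y⁆ = x * ⁅x ^ n, y⁆ * x⁻¹ * ⁅x, y⁆ := by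
          simp only [commutatorElement_def]; group
      _ = ⁅x, y⁆ ^ (n + 1) := by
          rw [ih, ← (h.pow_left n).eq, mul_inv_cancel_right, pow_succ]

theorem commutatorElement_pow_left_mem_iff {N : Subgroup G} [N.Normal] {x y : G}
    (h : ⁅⁅x, y⁆, x⁆ ∈ N) (n : ℕ) : ⁅x ^ n, y⁆ ∈ N ↔ ⁅x, y⁆ ^ n ∈ N := by
  rw [← QuotientGroup.ker_mk' N] at h ⊢
  simp only [MonoidHom.mem_ker, map_commutatorElement, map_pow] at h ⊢
  rw [commutatorElement_pow_left_of_commute (commutatorElement_eq_one_iff_commute.mp h)]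

theorem top_lowerCentralSeries_le_upperCentralSeries {n : ℕ}
    (h : (⊤ : Subgroup G).lowerCentralSeries n = ⊥) (m : ℕ) :
    (⊤ : Subgroup G).lowerCentralSeries (n - m) ≤ upperCentralSeries G m :=
  ascending_central_series_le_upper _
    (is_ascending_rev_series_of_is_descending G h lowerCentralSeries_isDescendingCentralSeries) m

theorem pow_mem_center_of_mem_commutator {n : ℕ}
    (hZ : (⊤ : Subgroup G).lowerCentralSeries 2 ≤ center G)
    (hexp : ∀ c ∈ (⊤ : Subgroup G).lowerCentralSeries 2, c ^ n = 1)
    {c : G} (hc : c ∈ _root_.commutator G) : c ^ n ∈ center G := by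
  refine mem_center_iff.mpr fun g => ?_
  have hcg : ⁅c, g⁆ ∈ (⊤ : Subgroup G).lowerCentralSeries 2 :=
    commutator_mem_commutator hc (mem_top g)
  have hcomm : Commute ⁅c, g⁆ c := (mem_center_iff.mp (hZ hcg) c).symm
  have : ⁅c ^ n, g⁆ = 1 := by rw [commutatorElement_pow_left_of_commute hcomm, hexp _ hcg]
  exact (commutatorElement_eq_one_iff_commute.mp this).eq.symm

theorem pow_mem_upperCentralSeries_two {n : ℕ}
    (hcl : (⊤ : Subgroup G).lowerCentralSeries 3 = ⊥)
    (hexp : ∀ c ∈ (⊤ : Subgroup G).lowerCentralSeries 2, c ^ n = 1) (x : G) :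
    x ^ n ∈ upperCentralSeries G 2 := by
  have hZ : (⊤ : Subgroup G).lowerCentralSeries 2 ≤ center G := by
    simpa using top_lowerCentralSeries_le_upperCentralSeries hcl 1
  refine mem_upperCentralSeries_succ_iff.mpr fun y => ?_
  have hxy : ⁅x, y⁆ ∈ _root_.commutator G := commutator_mem_commutator (mem_top x) (mem_top y)
  rw [upperCentralSeries_one, commutatorElement_pow_left_mem_iff
    (hZ (commutator_mem_commutator hxy (mem_top x)))]
  exact pow_mem_center_of_mem_commutator hZ hexp hxy

end Subgroup

theorem IsCaminaType.upperCentralSeries_two_le_frattini {G : Type*} [Group G] (hG : IsCaminaType G)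
    (hγ : (⊤ : Subgroup G).lowerCentralSeries 2 ≠ ⊥) :
    Subgroup.upperCentralSeries G 2 ≤ frattini G := by
  intro x hx
  by_contra hxΦ
  refine hγ (Subgroup.lowerCentralSeries_succ_eq_bot _ fun c hc => ?_)
  have hc' : c ∈ {z : G | ∃ g : G, z = x⁻¹ * g⁻¹ * x * g} := by rw [hG x hxΦ]; exact hc
  obtain ⟨g, rfl⟩ := hc'
  simpa [commutatorElement_def] using Subgroup.mem_upperCentralSeries_succ_iff.mp (inv_mem hx) g⁻¹

theorem stmt_10_general {p : ℕ} {G : Type*} [Group G] (hp : p.Prime)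
    (hG : IsCaminaType G)
    (hcl3 : (⊤ : Subgroup G).lowerCentralSeries 3 = ⊥) (hcard : Nat.card ((⊤ : Subgroup G).lowerCentralSeries 2) = p) :
    Subgroup.upperCentralSeries G 2 = frattini G := by
  have hexp : ∀ c ∈ (⊤ : Subgroup G).lowerCentralSeries 2, c ^ p = 1 := fun c hc =>
    hcard ▸ congrArg Subtype.val
      (pow_card_eq_one' (x := (⟨c, hc⟩ : (⊤ : Subgroup G).lowerCentralSeries 2)))
  refine le_antisymm (hG.upperCentralSeries_two_le_frattini fun hbot => ?_) ?_
  · rw [hbot, Subgroup.card_bot] at hcard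
    exact hp.one_lt.ne hcard
  · exact Subgroup.frattini_le_of_commutator_le_of_forall_pow_mem hp
      (Subgroup.top_lowerCentralSeries_le_upperCentralSeries hcl3 2)
      (Subgroup.pow_mem_upperCentralSeries_two hcl3 hexp)

/-- If `G` is a Camina-type finite p-group of nilpotency class 3 with `|γ₃(G)| = p`, then
the second center `Z₂(G)` equals the Frattini subgroup `Φ(G)`. -/
theorem stmt_10 {p : ℕ} {G : Type*} [Group G] [Finite G] (hp : p.Prime) (hpG : IsPGroup p G)
    (hG : IsCaminaType G)
    (hcl3 : (⊤ : Subgroup G).lowerCentralSeries 3 = ⊥) (hcard : Nat.card ((⊤ : Subgroup G).lowerCentralSeries 2) = p) :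
    Subgroup.upperCentralSeries G 2 = frattini G :=
  stmt_10_general hp hG hcl3 hcard
end

section
/- Let G be a finite p-group of nilpotency class 3 such that γ₂(G)Z(G)/Z(G) is cyclic. Then G/Z₂(G) is generated by 2 elements. -/
/-!
Since `γ₄(G) = 1`, commutators of commutators are central, and the Hall–Witt identity becomes the
Jacobi identity `⁅⁅u, v⁆, w⁆ ⁅⁅v, w⁆, u⁆ ⁅⁅w, u⁆, v⁆ = 1`. In the cyclic p-group
`γ₂(G)Z(G)/Z(G)` the image of a commutator `a = ⁅x, y⁆` of maximal order generates the images of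
all commutators. As `G/Z(G)` has class 2, every `g` can be corrected by powers of `x` and `y` to
an element `c` with `⁅x, c⁆, ⁅y, c⁆ ∈ Z(G)`. For `h ∈ G` write `⁅c, h⁆ ≡ a ^ k` modulo `Z(G)`;
the Jacobi identity first gives `⁅a, c⁆ = 1`, then `⁅a, x⁆ ^ k = ⁅a, y⁆ ^ k = 1`, and finally
`⁅a ^ k, w⁆ = 1` for every `w`, since `⁅a, w⁆` is a product of powers of `⁅a, x⁆` and `⁅a, y⁆`.
So `⁅c, h⁆ ∈ Z(G)`, i.e. `c ∈ Z₂(G)`, and `G = ⟨x, y⟩ Z₂(G)`.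
-/

open Subgroup
open scoped commutatorElement

section CommutatorCalculus

variable {G : Type*} [Group G]

theorem conj_eq_self_of_mem_center {z : G} (hz : z ∈ center G) (g : G) : g * z * g⁻¹ = z := by
  rw [mem_center_iff.mp hz g, mul_inv_cancel_right]

theorem commutatorElement_eq_one_of_left_mem_center {z : G}
    (hz : z ∈ center G) (g : G) : ⁅z, g⁆ = 1 :=
  commutatorElement_eq_one_iff_mul_comm.mpr (mem_center_iff.mp hz g).symm

theorem commutatorElement_mul_left_of_mem_center {z : G} (hz : z ∈ center G) (u v : G) :
    ⁅u * z, v⁆ = ⁅u, v⁆ := by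
  rw [commutatorElement_mul_left_eq_conj_mul, commutatorElement_eq_one_of_left_mem_center hz,
    mul_one, mul_inv_cancel, one_mul]

theorem commutatorElement_mul_right_of_mem_center {u w : G} (h : ⁅u, w⁆ ∈ center G) (v : G) :
    ⁅u, v * w⁆ = ⁅u, v⁆ * ⁅u, w⁆ := by
  rw [commutatorElement_mul_right_eq_mul_conj, mul_assoc _ v, mul_assoc,
    conj_eq_self_of_mem_center h]

theorem commutatorElement_zpow_left_of_mem_center {u v : G} (h : ⁅u, v⁆ ∈ center G) (k : ℤ) :
    ⁅u ^ k, v⁆ = ⁅u, v⁆ ^ k := by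
  have hcomm : Commute u⁻¹ ⁅u, v⁆ := mem_center_iff.mp h u⁻¹
  calc ⁅u ^ k, v⁆ = u ^ k * (v * u⁻¹ * v⁻¹) ^ k := by
        rw [conj_zpow, commutatorElement_def, inv_zpow', zpow_neg]; group
    _ = u ^ k * (u⁻¹ * ⁅u, v⁆) ^ k := by rw [commutatorElement_def]; group
    _ = ⁅u, v⁆ ^ k := by rw [hcomm.mul_zpow, inv_zpow, mul_inv_cancel_left]

theorem commutatorElement_zpow_right_of_mem_center {u v : G} (h : ⁅u, v⁆ ∈ center G) (k : ℤ) :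
    ⁅u, v ^ k⁆ = ⁅u, v⁆ ^ k := by
  have h' : ⁅v, u⁆ ∈ center G := commutatorElement_inv u v ▸ inv_mem h
  rw [← commutatorElement_inv, commutatorElement_zpow_left_of_mem_center h', ← inv_zpow,
    commutatorElement_inv]

theorem commutatorElement_left_eq_zpow_of_mk_eq {a b w : G} {k : ℤ}
    (hb : (a : G ⧸ center G) ^ k = b) (ha : ⁅a, w⁆ ∈ center G) : ⁅b, w⁆ = ⁅a, w⁆ ^ k := by
  have hz : (a ^ k)⁻¹ * b ∈ center G := QuotientGroup.eq.mp (by rw [QuotientGroup.mk_zpow, hb])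
  rw [← mul_inv_cancel_left (a ^ k) b, commutatorElement_mul_left_of_mem_center hz,
    commutatorElement_zpow_left_of_mem_center ha]

end CommutatorCalculus

theorem QuotientGroup.mk_commutatorElement {G : Type*} [Group G] (N : Subgroup G) [N.Normal]
    (a b : G) : ((⁅a, b⁆ : G) : G ⧸ N) = ⁅(a : G ⧸ N), (b : G ⧸ N)⁆ :=
  map_commutatorElement (QuotientGroup.mk' N) a b

theorem commutatorElement_mul_zpow_mul_zpow_eq_one {H : Type*} [Group H]
    (hH : ∀ u v : H, ⁅u, v⁆ ∈ center H) {x y g : H} {s t : ℤ}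
    (hs : ⁅x, y⁆ ^ s = ⁅x, g⁆) (ht : ⁅x, y⁆ ^ t = ⁅y, g⁆) :
    ⁅x, g * y ^ (-s) * x ^ t⁆ = 1 ∧ ⁅y, g * y ^ (-s) * x ^ t⁆ = 1 := by
  simp only [commutatorElement_mul_right_of_mem_center (hH _ _),
    commutatorElement_zpow_right_of_mem_center (hH _ _), commutatorElement_self, one_zpow,
    mul_one]
  constructor
  · rw [← hs, ← zpow_add, add_neg_cancel, zpow_zero]
  · rw [← ht, ← commutatorElement_inv, inv_zpow, inv_mul_cancel]

open Finset in
theorem IsCyclic.mem_zpowers_of_orderOf_dvd {α : Type*} [Group α] [Finite α] [IsCyclic α]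
    {x a : α} (h : orderOf x ∣ orderOf a) : x ∈ zpowers a := by
  classical
  have := Fintype.ofFinite α
  have hsub : (zpowers a : Set α).toFinset ⊆ ({z : α | z ^ orderOf a = 1} : Finset α) := by
    intro z hz
    obtain ⟨k, rfl⟩ := mem_zpowers_iff.mp (Set.mem_toFinset.mp hz)
    rw [mem_filter_univ, ← zpow_natCast, ← zpow_mul, mul_comm, zpow_mul, zpow_natCast,
      pow_orderOf_eq_one, one_zpow]
  have hcard : #{z : α | z ^ orderOf a = 1} ≤ #(zpowers a : Set α).toFinset := by
    rw [Set.toFinset_card, ← Nat.card_eq_fintype_card]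
    exact (IsCyclic.card_pow_eq_one_le (orderOf_pos a)).trans (Nat.card_zpowers a).ge
  have hx : x ∈ ({z : α | z ^ orderOf a = 1} : Finset α) :=
    (mem_filter_univ x).mpr (orderOf_dvd_iff_pow_eq_one.mp h)
  rw [← eq_of_subset_of_card_le hsub hcard] at hx
  exact Set.mem_toFinset.mp hx

theorem IsPGroup.orderOf_dvd_of_orderOf_le {p : ℕ} {G : Type*} [Group G] (hp : p.Prime)
    (hG : IsPGroup p G) {x y : G} (h : orderOf x ≤ orderOf y) : orderOf x ∣ orderOf y := by
  have := Fact.mk hp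
  obtain ⟨i, hi⟩ := IsPGroup.iff_orderOf.mp hG x
  obtain ⟨j, hj⟩ := IsPGroup.iff_orderOf.mp hG y
  rw [hi, hj] at h ⊢
  exact pow_dvd_pow p ((Nat.pow_le_pow_iff_right hp.one_lt).mp h)

theorem IsPGroup.exists_forall_mem_zpowers_of_isCyclic {p : ℕ} {G ι : Type*} [Group G]
    [Finite G] [Finite ι] [Nonempty ι] (hp : p.Prime) (hG : IsPGroup p G) {C : Subgroup G}
    (hC : IsCyclic C) (f : ι → G) (hf : ∀ i, f i ∈ C) : ∃ j, ∀ i, f i ∈ zpowers (f j) := by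
  obtain ⟨j, hj⟩ := Finite.exists_max (fun i => orderOf (f i))
  refine ⟨j, fun i => ?_⟩
  have hdvd : orderOf (⟨f i, hf i⟩ : C) ∣ orderOf (⟨f j, hf j⟩ : C) := by
    simpa only [Subgroup.orderOf_mk] using hG.orderOf_dvd_of_orderOf_le hp (hj i)
  obtain ⟨k, hk⟩ := mem_zpowers_iff.mp (IsCyclic.mem_zpowers_of_orderOf_dvd hdvd)
  exact mem_zpowers_iff.mpr ⟨k, congrArg Subtype.val hk⟩

section ClassThree

variable {G : Type*} [Group G]

theorem commutatorElement_commutatorElement_mem_center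
    (h : (⊤ : Subgroup G).lowerCentralSeries 3 = ⊥) (u v w : G) : ⁅⁅u, v⁆, w⁆ ∈ center G := by
  refine mem_center_iff.mpr fun g => (commutatorElement_eq_one_iff_mul_comm.mp ?_).symm
  rw [← mem_bot, ← h]
  exact commutator_mem_commutator (commutator_mem_commutator
    (commutator_mem_commutator (mem_top u) (mem_top v)) (mem_top w)) (mem_top g)

theorem commutatorElement_commutatorElement_jacobi
    (hG : ∀ u v w : G, ⁅⁅u, v⁆, w⁆ ∈ center G) (u v w : G) :
    ⁅⁅u, v⁆, w⁆ * ⁅⁅v, w⁆, u⁆ * ⁅⁅w, u⁆, v⁆ = 1 := by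
  have hinv : ∀ a b c : G, ⁅⁅b⁻¹, a⁆, c⁆ = ⁅⁅a, b⁆, c⁆ := fun a b c => by
    have hz : ⁅⁅a, b⁆⁻¹, b⁻¹⁆ ∈ center G := commutatorElement_inv a b ▸ hG b a b⁻¹
    rw [show ⁅b⁻¹, a⁆ = ⁅a, b⁆ * ⁅⁅a, b⁆⁻¹, b⁻¹⁆ by simp only [commutatorElement_def]; group,
      commutatorElement_mul_left_of_mem_center hz]
  calc ⁅⁅u, v⁆, w⁆ * ⁅⁅v, w⁆, u⁆ * ⁅⁅w, u⁆, v⁆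
      = v * ⁅⁅v⁻¹, u⁆, w⁆ * v⁻¹ * (w * ⁅⁅w⁻¹, v⁆, u⁆ * w⁻¹) * (u * ⁅⁅u⁻¹, w⁆, v⁆ * u⁻¹) := by
        rw [hinv, hinv, hinv, conj_eq_self_of_mem_center (hG u v w),
          conj_eq_self_of_mem_center (hG v w u), conj_eq_self_of_mem_center (hG w u v)]
    _ = 1 := by
        simpa only [mul_assoc] using conj_commutatorElement_left_commutatorElement_mul v u w

theorem commutatorElement_mem_center_quotient_center (hG : ∀ u v w : G, ⁅⁅u, v⁆, w⁆ ∈ center G)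
    (u v : G ⧸ center G) : ⁅u, v⁆ ∈ center (G ⧸ center G) := by
  obtain ⟨u, rfl⟩ := QuotientGroup.mk_surjective u
  obtain ⟨v, rfl⟩ := QuotientGroup.mk_surjective v
  refine mem_center_iff.mpr fun w => ?_
  obtain ⟨w, rfl⟩ := QuotientGroup.mk_surjective w
  refine (commutatorElement_eq_one_iff_mul_comm.mp ?_).symm
  rw [← QuotientGroup.mk_commutatorElement, ← QuotientGroup.mk_commutatorElement,
    QuotientGroup.eq_one_iff]
  exact hG u v w

theorem zpow_commutatorElement_mem_center {x y : G}
    (hG : ∀ u v w : G, ⁅⁅u, v⁆, w⁆ ∈ center G)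
    (hgen : ∀ u v : G, ((⁅u, v⁆ : G) : G ⧸ center G) ∈ zpowers ((⁅x, y⁆ : G) : G ⧸ center G))
    {k : ℤ} (hx : ⁅⁅x, y⁆, x⁆ ^ k = 1) (hy : ⁅⁅x, y⁆, y⁆ ^ k = 1) : ⁅x, y⁆ ^ k ∈ center G := by
  refine mem_center_iff.mpr fun w => (commutatorElement_eq_one_iff_mul_comm.mp ?_).symm
  obtain ⟨s, hs⟩ := mem_zpowers_iff.mp (hgen y w)
  obtain ⟨t, ht⟩ := mem_zpowers_iff.mp (hgen w x)
  have hcycle := commutatorElement_commutatorElement_jacobi hG x y w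
  rw [commutatorElement_left_eq_zpow_of_mk_eq hs (hG x y x),
    commutatorElement_left_eq_zpow_of_mk_eq ht (hG x y y), mul_assoc] at hcycle
  have hcomm : Commute (⁅⁅x, y⁆, x⁆ ^ s) (⁅⁅x, y⁆, y⁆ ^ t) :=
    mem_center_iff.mp (zpow_mem (hG x y y) t) _
  rw [commutatorElement_zpow_left_of_mem_center (hG x y w), eq_inv_of_mul_eq_one_left hcycle,
    inv_zpow, hcomm.mul_zpow, ← zpow_mul, zpow_mul', hx, ← zpow_mul, zpow_mul', hy]
  simp

theorem mem_upperCentralSeries_two_of_commutatorElement_mem_center {x y : G}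
    (hG : ∀ u v w : G, ⁅⁅u, v⁆, w⁆ ∈ center G)
    (hgen : ∀ u v : G, ((⁅u, v⁆ : G) : G ⧸ center G) ∈ zpowers ((⁅x, y⁆ : G) : G ⧸ center G))
    {c : G} (hx : ⁅x, c⁆ ∈ center G) (hy : ⁅y, c⁆ ∈ center G) :
    c ∈ Subgroup.upperCentralSeries G 2 := by
  have hac : ⁅⁅x, y⁆, c⁆ = 1 := by
    have hcycle := commutatorElement_commutatorElement_jacobi hG x y c
    rwa [commutatorElement_eq_one_of_left_mem_center hy,
      commutatorElement_eq_one_of_left_mem_center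
        (z := ⁅c, x⁆) (commutatorElement_inv x c ▸ inv_mem hx),
      mul_one, mul_one] at hcycle
  refine Subgroup.mem_upperCentralSeries_succ_iff.mpr fun h : G => ?_
  obtain ⟨k, hk⟩ := mem_zpowers_iff.mp (hgen c h)
  have hkill : ∀ w : G, ⁅w, c⁆ ∈ center G → ⁅⁅x, y⁆, w⁆ ^ k = 1 := by
    intro w hw
    -- Jacobi for `c, h, w`: `⁅⁅h, w⁆, c⁆` is a power of `⁅⁅x, y⁆, c⁆ = 1`.
    obtain ⟨m, hm⟩ := mem_zpowers_iff.mp (hgen h w)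
    have hcycle := commutatorElement_commutatorElement_jacobi hG c h w
    rwa [commutatorElement_left_eq_zpow_of_mk_eq hm (hac ▸ one_mem _), hac, one_zpow, mul_one,
      commutatorElement_eq_one_of_left_mem_center hw, mul_one,
      commutatorElement_left_eq_zpow_of_mk_eq hk (hG x y w)] at hcycle
  rw [Subgroup.upperCentralSeries_one, ← QuotientGroup.eq_one_iff, ← hk,
    ← QuotientGroup.mk_zpow, QuotientGroup.eq_one_iff]
  exact zpow_commutatorElement_mem_center hG hgen (hkill x hx) (hkill y hy)

theorem exists_mul_zpow_mul_zpow_mem_upperCentralSeries_two {x y : G}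
    (hG : ∀ u v w : G, ⁅⁅u, v⁆, w⁆ ∈ center G)
    (hgen : ∀ u v : G, ((⁅u, v⁆ : G) : G ⧸ center G) ∈ zpowers ((⁅x, y⁆ : G) : G ⧸ center G))
    (g : G) :
    ∃ s t : ℤ, g * y ^ s * x ^ t ∈ Subgroup.upperCentralSeries G 2 := by
  obtain ⟨s, hs⟩ := mem_zpowers_iff.mp (hgen x g)
  obtain ⟨t, ht⟩ := mem_zpowers_iff.mp (hgen y g)
  simp only [QuotientGroup.mk_commutatorElement] at hs ht
  obtain ⟨hxc, hyc⟩ := commutatorElement_mul_zpow_mul_zpow_eq_one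
    (commutatorElement_mem_center_quotient_center hG) hs ht
  refine ⟨-s, t, mem_upperCentralSeries_two_of_commutatorElement_mem_center hG hgen ?_ ?_⟩ <;>
    rwa [← QuotientGroup.eq_one_iff, QuotientGroup.mk_commutatorElement, QuotientGroup.mk_mul,
      QuotientGroup.mk_mul, QuotientGroup.mk_zpow, QuotientGroup.mk_zpow]

end ClassThree

theorem stmt_11_general {p : ℕ} {G : Type*} [Group G] [Finite G] (hp : p.Prime) (hpG : IsPGroup p G)
    (hcl3' : (⊤ : Subgroup G).lowerCentralSeries 3 = ⊥)
    (hcyc : IsCyclic ((commutator G).map (QuotientGroup.mk' (Subgroup.center G)))) :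
    ∃ a b : G ⧸ Subgroup.upperCentralSeries G 2, Subgroup.closure {a, b} = ⊤ := by
  have hG := commutatorElement_commutatorElement_mem_center hcl3'
  obtain ⟨⟨x, y⟩, hgen⟩ := IsPGroup.exists_forall_mem_zpowers_of_isCyclic hp
    (hpG.to_quotient (center G)) hcyc (fun uv : G × G => ((⁅uv.1, uv.2⁆ : G) : G ⧸ center G))
    fun uv => mem_map_of_mem _ (commutator_mem_commutator (mem_top uv.1) (mem_top uv.2))
  refine ⟨x, y, eq_top_iff.mpr fun q _ => ?_⟩
  obtain ⟨g, rfl⟩ := QuotientGroup.mk_surjective q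
  obtain ⟨s, t, hst⟩ :=
    exists_mul_zpow_mul_zpow_mem_upperCentralSeries_two hG (fun u v => hgen (u, v)) g
  rw [← QuotientGroup.eq_one_iff, QuotientGroup.mk_mul, QuotientGroup.mk_mul, mul_assoc,
    QuotientGroup.mk_zpow, QuotientGroup.mk_zpow] at hst
  rw [eq_inv_of_mul_eq_one_left hst]
  exact inv_mem (mul_mem (zpow_mem (subset_closure (by simp)) s)
    (zpow_mem (subset_closure (by simp)) t))

/-- If `G` is a finite p-group of nilpotency class 3 such that `γ₂(G)Z(G)/Z(G)` is cyclic,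
then `G/Z₂(G)` is generated by 2 elements. -/
theorem stmt_11 {p : ℕ} {G : Type*} [Group G] [Finite G] (hp : p.Prime) (hpG : IsPGroup p G)
    (hcl3 : (⊤ : Subgroup G).lowerCentralSeries 2 ≠ ⊥) (hcl3' : (⊤ : Subgroup G).lowerCentralSeries 3 = ⊥)
    (hcyc : IsCyclic ((commutator G).map (QuotientGroup.mk' (Subgroup.center G)))) :
    ∃ a b : G ⧸ Subgroup.upperCentralSeries G 2, Subgroup.closure {a, b} = ⊤ :=
  stmt_11_general hp hpG hcl3' hcyc
end

section
/- Let G be a 2-generator finite p-group of nilpotency class at least 3 such that γ₂(G) is cyclic and |γ₂(G)/γ₃(G)| > 2. Then |Aut_c(G)| = |γ₂(G)|² and Aut_c(G) = Inn(G). -/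
open Finset Subgroup
open scoped commutatorElement

namespace Int

variable {p : ℕ} {θ : ℤ}

theorem emultiplicity_geom_sum (hp : p.Prime) (hθ : (p : ℤ) ∣ θ - 1)
    (hθ₂ : p = 2 → (4 : ℤ) ∣ θ - 1) (k : ℕ) :
    emultiplicity (p : ℤ) (∑ i ∈ Finset.range k, θ ^ i) = emultiplicity (p : ℤ) k := by
  rcases eq_or_ne θ 1 with rfl | hθ₁
  · simp
  have hpZ := Nat.prime_iff_prime_int.mp hp
  have hθp : ¬(p : ℤ) ∣ θ := fun h ↦ hpZ.not_dvd_one (by simpa using dvd_sub h hθ)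
  have hlte : emultiplicity (p : ℤ) (θ ^ k - 1 ^ k) =
      emultiplicity (p : ℤ) (θ - 1) + emultiplicity (p : ℤ) k := by
    rcases hp.eq_two_or_odd' with rfl | hodd
    · exact two_pow_sub_pow' k (hθ₂ rfl) hθp
    · rw [emultiplicity_pow_sub_pow hp hodd hθ hθp, natCast_emultiplicity]
  rw [one_pow, ← geom_sum_mul, emultiplicity_mul hpZ, add_comm (emultiplicity _ (θ - 1))] at hlte
  refine WithTop.add_right_cancel ?_ hlte
  exact finiteMultiplicity_iff_emultiplicity_ne_top.mp
    (finiteMultiplicity_iff.mpr ⟨by simpa using hp.one_lt.ne', sub_ne_zero.mpr hθ₁⟩)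

theorem pow_dvd_geom_sum_iff (hp : p.Prime) (hθ : (p : ℤ) ∣ θ - 1)
    (hθ₂ : p = 2 → (4 : ℤ) ∣ θ - 1) (m k : ℕ) :
    (p : ℤ) ^ m ∣ ∑ i ∈ Finset.range k, θ ^ i ↔ p ^ m ∣ k := by
  rw [pow_dvd_iff_le_emultiplicity, emultiplicity_geom_sum hp hθ hθ₂,
    ← pow_dvd_iff_le_emultiplicity]
  exact_mod_cast Iff.rfl

theorem exists_geom_sum_modEq (hp : p.Prime) (hθ : (p : ℤ) ∣ θ - 1)
    (hθ₂ : p = 2 → (4 : ℤ) ∣ θ - 1) (m : ℕ) (w : ℤ) :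
    ∃ k : ℕ, ∑ i ∈ Finset.range k, θ ^ i ≡ w [ZMOD (p ^ m : ℕ)] := by
  have : NeZero (p ^ m) := ⟨pow_ne_zero m hp.ne_zero⟩
  let f : Fin (p ^ m) → ZMod (p ^ m) := fun k ↦ ((∑ i ∈ Finset.range k, θ ^ i : ℤ) : ZMod (p ^ m))
  have hf : Function.Injective f := by
    intro i j hij
    wlog hji : (j : ℕ) ≤ i generalizing i j
    · exact (this hij.symm (le_of_not_ge hji)).symm
    obtain ⟨d, hd⟩ := Nat.exists_eq_add_of_le hji
    have hsplit : ∑ l ∈ Finset.range i, θ ^ l - ∑ l ∈ Finset.range j, θ ^ l =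
        θ ^ (j : ℕ) * ∑ l ∈ Finset.range d, θ ^ l := by
      rw [hd, sum_range_add, mul_sum]
      simp [pow_add]
    have hcop : IsCoprime ((p : ℤ) ^ m) (θ ^ (j : ℕ)) := by
      obtain ⟨t, ht⟩ := hθ
      exact IsCoprime.pow (x := (p : ℤ)) ⟨-t, 1, by linear_combination ht⟩
    have hdvd : (p : ℤ) ^ m ∣ θ ^ (j : ℕ) * ∑ l ∈ Finset.range d, θ ^ l := by
      rw [← hsplit]
      exact_mod_cast (ZMod.intCast_eq_intCast_iff_dvd_sub _ _ _).mp hij.symm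
    have hpd := (pow_dvd_geom_sum_iff hp hθ hθ₂ m d).mp (hcop.dvd_of_dvd_mul_left hdvd)
    have : d = 0 := Nat.eq_zero_of_dvd_of_lt hpd (by omega)
    exact Fin.ext (by omega)
  have hf' := Finite.injective_iff_surjective_of_equiv (f := f) (Fintype.equivOfCardEq (by simp))
  obtain ⟨k, hk⟩ := hf'.mp hf (w : ZMod (p ^ m))
  exact ⟨k, (ZMod.intCast_eq_intCast_iff _ _ _).mp hk⟩

end Int

theorem Nat.Prime.dvd_and_four_dvd_of_two_lt_pow {p n : ℕ} (hp : p.Prime) (h : 2 < p ^ n) :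
    p ∣ p ^ n ∧ (p = 2 → 4 ∣ p ^ n) := by
  have hn : n ≠ 0 := by rintro rfl; simp at h
  refine ⟨dvd_pow_self p hn, ?_⟩
  rintro rfl
  exact pow_dvd_pow 2 ((Nat.pow_lt_pow_iff_right (by norm_num)).mp (pow_one 2 ▸ h))

theorem IsCyclic.le_of_card_dvd {Γ : Type*} [Group Γ] [Finite Γ] [IsCyclic Γ]
    {H K : Subgroup Γ} (h : Nat.card H ∣ Nat.card K) : H ≤ K := by
  let := IsCyclic.commGroup (α := Γ)
  have hK : K = (powMonoidHom (Nat.card K) : Γ →* Γ).ker :=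
    eq_of_le_of_card_ge (fun x hx ↦ orderOf_dvd_iff_pow_eq_one.mp (K.orderOf_dvd_natCard hx))
      (by rw [IsCyclic.card_powMonoidHom_ker, Nat.gcd_eq_right (card_subgroup_dvd_card K)])
  rw [hK]
  exact fun x hx ↦ orderOf_dvd_iff_pow_eq_one.mp ((H.orderOf_dvd_natCard hx).trans h)

theorem IsCyclic.characteristic {Γ : Type*} [Group Γ] [Finite Γ] [IsCyclic Γ]
    (K : Subgroup Γ) : K.Characteristic :=
  characteristic_iff_map_le.mpr fun φ ↦
    IsCyclic.le_of_card_dvd (card_map_of_injective φ.injective).dvd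

section Commutators

variable {G : Type*} [Group G]

theorem Subgroup.zpow_mem_iff_relIndex_dvd (N : Subgroup G) [N.Normal] (c : G) (k : ℤ) :
    c ^ k ∈ N ↔ (N.relIndex (zpowers c) : ℤ) ∣ k := by
  rw [← QuotientGroup.ker_mk' N, relIndex_ker, MonoidHom.map_zpowers, Nat.card_zpowers,
    orderOf_dvd_iff_zpow_eq_one, ← map_zpow, MonoidHom.mem_ker]

theorem commutator_le_of_commutatorElement_mem {a b : G} (hab : closure {a, b} = ⊤)
    {N : Subgroup G} [N.Normal] (h : ⁅a, b⁆ ∈ N) : commutator G ≤ N := by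
  rw [← Normal.quotient_commutative_iff_commutator_le]
  have hgen : closure {QuotientGroup.mk' N a, QuotientGroup.mk' N b} = ⊤ := by
    rw [← Set.image_pair (QuotientGroup.mk' N), ← MonoidHom.map_closure, hab,
      map_top_of_surjective _ (QuotientGroup.mk'_surjective N)]
  have hab' : Commute (QuotientGroup.mk' N a) (QuotientGroup.mk' N b) := by
    rw [← commutatorElement_eq_one_iff_commute, ← map_commutatorElement]
    exact (QuotientGroup.eq_one_iff _).mpr h
  have := isMulCommutative_closure (k := {QuotientGroup.mk' N a, QuotientGroup.mk' N b}) (by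
    simp only [Set.mem_insert_iff, Set.mem_singleton_iff]
    rintro x (rfl | rfl) y (rfl | rfl) <;> first | rfl | exact hab' | exact hab'.symm)
  rw [hgen] at this
  exact ⟨⟨fun x y ↦ setLike_mul_comm (mem_top x) (mem_top y)⟩⟩

theorem commutator_eq_zpowers_commutatorElement [Finite (commutator G)]
    [IsCyclic (commutator G)] {a b : G} (hab : closure {a, b} = ⊤) :
    commutator G = zpowers ⁅a, b⁆ := by
  have hc : ⁅a, b⁆ ∈ commutator G := commutator_mem_commutator (mem_top a) (mem_top b)
  have := IsCyclic.characteristic (zpowers (⟨⁅a, b⁆, hc⟩ : commutator G))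
  have hmap : (zpowers (⟨⁅a, b⁆, hc⟩ : commutator G)).map (commutator G).subtype =
      zpowers ⁅a, b⁆ :=
    MonoidHom.map_zpowers _ _
  have : (zpowers ⁅a, b⁆).Normal := hmap ▸ inferInstance
  exact le_antisymm (commutator_le_of_commutatorElement_mem hab (mem_zpowers _))
    (zpowers_le.mpr hc)

theorem exists_conj_eq_zpow_and_relIndex_dvd {c : G} [(zpowers c).Normal] (g : G) :
    ∃ θ : ℤ, g * c * g⁻¹ = c ^ θ ∧
      ((⁅zpowers c, ⊤⁆ : Subgroup G).relIndex (zpowers c) : ℤ) ∣ θ - 1 := by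
  obtain ⟨θ, hθ⟩ := mem_zpowers_iff.mp (Normal.conj_mem ‹_› c (mem_zpowers c) g)
  refine ⟨θ, hθ.symm, (zpow_mem_iff_relIndex_dvd _ c _).mp ?_⟩
  rw [zpow_sub_one, hθ, commutator_comm, ← commutatorElement_def]
  exact commutator_mem_commutator (mem_top g) (mem_zpowers c)

theorem commutatorElement_pow_left {x y : G} {θ : ℤ} (h : x * ⁅x, y⁆ * x⁻¹ = ⁅x, y⁆ ^ θ)
    (k : ℕ) : ⁅x ^ k, y⁆ = ⁅x, y⁆ ^ (∑ i ∈ range k, θ ^ i) := by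
  induction k with
  | zero => simp
  | succ k ih =>
    rw [pow_succ', commutatorElement_mul_left_eq_conj_mul, ih, ← conj_zpow, h, ← zpow_mul,
      ← zpow_add_one, geom_sum_succ]

theorem exists_commutatorElement_pow_left_eq {p : ℕ} [Fact p.Prime] [Finite (commutator G)]
    [IsCyclic (commutator G)] (hpG : IsPGroup p (commutator G)) {x y : G}
    (hxy : closure {x, y} = ⊤)
    (hidx : 2 < ((⊤ : Subgroup G).lowerCentralSeries 2).relIndex (commutator G))
    {u : G} (hu : u ∈ commutator G) : ∃ k : ℕ, ⁅x ^ k, y⁆ = u := by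
  have hΓ := commutator_eq_zpowers_commutatorElement hxy
  have : (zpowers ⁅x, y⁆).Normal := hΓ ▸ inferInstance
  obtain ⟨θ, hθ, hdvd⟩ := exists_conj_eq_zpow_and_relIndex_dvd (c := ⁅x, y⁆) x
  obtain ⟨n, hn⟩ := hpG.index (((⊤ : Subgroup G).lowerCentralSeries 2).subgroupOf (commutator G))
  change ((⊤ : Subgroup G).lowerCentralSeries 2).relIndex (commutator G) = p ^ n at hn
  rw [show (⊤ : Subgroup G).lowerCentralSeries 2 = ⁅commutator G, ⊤⁆ from rfl, hΓ] at hidx hn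
  obtain ⟨hp₁, hp₂⟩ := Nat.Prime.dvd_and_four_dvd_of_two_lt_pow Fact.out (hn ▸ hidx)
  rw [hn] at hdvd
  obtain ⟨m, hm⟩ := hpG.exists_card_eq
  rw [hΓ, Nat.card_zpowers] at hm
  obtain ⟨w, rfl⟩ := mem_zpowers_iff.mp (hΓ ▸ hu)
  obtain ⟨k, hk⟩ := Int.exists_geom_sum_modEq Fact.out (dvd_trans (by exact_mod_cast hp₁) hdvd)
    (fun h ↦ dvd_trans (by exact_mod_cast hp₂ h) hdvd) m w
  refine ⟨k, ?_⟩
  rw [commutatorElement_pow_left hθ, zpow_eq_zpow_iff_modEq, hm]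
  exact hk

theorem exists_commutatorElement_eq_pair_of_forall {N : Subgroup G} [N.Normal] {a b : G}
    (ha : ∀ u ∈ N, ∃ x : G, Commute x b ∧ ⁅x, a⁆ = u)
    (hb : ∀ v ∈ N, ∃ y : G, Commute y a ∧ ⁅y, b⁆ = v)
    {u v : G} (hu : u ∈ N) (hv : v ∈ N) : ∃ g : G, ⁅g, a⁆ = u ∧ ⁅g, b⁆ = v := by
  obtain ⟨x, hxb, rfl⟩ := ha u hu
  obtain ⟨y, hya, hy⟩ := hb (x⁻¹ * v * x⁻¹⁻¹) (Normal.conj_mem ‹_› v hv x⁻¹)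
  refine ⟨x * y, ?_, ?_⟩
  · rw [commutatorElement_mul_left_eq_conj_mul, commutatorElement_eq_one_iff_commute.mpr hya]
    group
  · rw [commutatorElement_mul_left_eq_conj_mul, hy, commutatorElement_eq_one_iff_commute.mpr hxb]
    group

end Commutators

section ClassPreserving

variable {G : Type*} [Group G]

theorem MulAut.eq_of_eq_on_generators {a b : G} (hab : closure {a, b} = ⊤) {φ ψ : MulAut G}
    (ha : φ a = ψ a) (hb : φ b = ψ b) : φ = ψ :=
  MulEquiv.toMonoidHom_injective <| MonoidHom.eq_of_eqOn_dense hab <| by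
    rintro _ (rfl | rfl)
    exacts [ha, hb]

theorem mul_inv_mem_commutator_of_mem_autC {φ : MulAut G} (hφ : φ ∈ autC G) (x : G) :
    φ x * x⁻¹ ∈ commutator G := by
  obtain ⟨g, hg⟩ := isConj_iff.mp (hφ x)
  rw [← hg]
  exact commutator_mem_commutator (mem_top g) (mem_top x)

theorem conj_mem_autC (g : G) : MulAut.conj g ∈ autC G :=
  fun _ ↦ isConj_iff.mpr ⟨g, rfl⟩

theorem card_autC_eq_and_autC_eq_range_conj {a b : G} (hab : closure {a, b} = ⊤)
    (hpair : ∀ u ∈ commutator G, ∀ v ∈ commutator G, ∃ g : G, ⁅g, a⁆ = u ∧ ⁅g, b⁆ = v) :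
    Nat.card (autC G) = Nat.card (commutator G) ^ 2 ∧
      autC G = (MulAut.conj : G →* MulAut G).range := by
  let f : autC G → commutator G × commutator G := fun φ ↦
    (⟨φ.1 a * a⁻¹, mul_inv_mem_commutator_of_mem_autC φ.2 a⟩,
      ⟨φ.1 b * b⁻¹, mul_inv_mem_commutator_of_mem_autC φ.2 b⟩)
  have hf : Function.Injective f := fun φ ψ h ↦ Subtype.ext <|
    MulAut.eq_of_eq_on_generators hab (mul_right_cancel (congrArg (fun q ↦ (q.1 : G)) h))
      (mul_right_cancel (congrArg (fun q ↦ (q.2 : G)) h))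
  have hf_conj : ∀ q, ∃ g : G, f ⟨MulAut.conj g, conj_mem_autC g⟩ = q := by
    rintro ⟨⟨u, hu⟩, ⟨v, hv⟩⟩
    obtain ⟨g, rfl, rfl⟩ := hpair u hu v hv
    exact ⟨g, rfl⟩
  refine ⟨?_, le_antisymm (fun φ hφ ↦ ?_) ?_⟩
  · rw [Nat.card_eq_of_bijective f ⟨hf, fun q ↦ (hf_conj q).elim fun _ h ↦ ⟨_, h⟩⟩,
      Nat.card_prod, sq]
  · obtain ⟨g, hg⟩ := hf_conj (f ⟨φ, hφ⟩)
    exact ⟨g, congrArg Subtype.val (hf hg)⟩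
  · rintro _ ⟨g, rfl⟩
    exact conj_mem_autC g

end ClassPreserving

theorem stmt_13_general {p : ℕ} {G : Type*} [Group G] [Finite G] (hp : p.Prime) (hpG : IsPGroup p G)
    (hgen : Group.rank G = 2)
    (hcyc : IsCyclic (commutator G))
    (hidx : 2 < ((⊤ : Subgroup G).lowerCentralSeries 2).relIndex ((⊤ : Subgroup G).lowerCentralSeries 1)) :
    Nat.card (autC G) = Nat.card (commutator G) ^ 2 ∧
      autC G = (MulAut.conj : G →* MulAut G).range := by
  classical
  have : Fact p.Prime := ⟨hp⟩
  obtain ⟨S, hS, hSgen⟩ := Group.rank_spec G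
  obtain ⟨a, b, -, rfl⟩ := Finset.card_eq_two.mp (hS.trans hgen)
  have hab : closure {a, b} = ⊤ := by simpa using hSgen
  have hba : closure {b, a} = ⊤ := Set.pair_comm a b ▸ hab
  have hΓ := hpG.to_subgroup (commutator G)
  refine card_autC_eq_and_autC_eq_range_conj hab fun u hu v hv ↦
    exists_commutatorElement_eq_pair_of_forall (fun u hu ↦ ?_) (fun v hv ↦ ?_) hu hv
  · obtain ⟨k, hk⟩ := exists_commutatorElement_pow_left_eq hΓ hba hidx hu
    exact ⟨b ^ k, (Commute.refl b).pow_left k, hk⟩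
  · obtain ⟨k, hk⟩ := exists_commutatorElement_pow_left_eq hΓ hab hidx hv
    exact ⟨a ^ k, (Commute.refl a).pow_left k, hk⟩

/-- If `G` is a 2-generator finite p-group of nilpotency class at least 3 with `γ₂(G)`
cyclic and `|γ₂(G)/γ₃(G)| > 2`, then `|Aut_c(G)| = |γ₂(G)|²` and `Aut_c(G) = Inn(G)`. -/
theorem stmt_13 {p : ℕ} {G : Type*} [Group G] [Finite G] (hp : p.Prime) (hpG : IsPGroup p G)
    (hgen : Group.rank G = 2)
    (hcl : (⊤ : Subgroup G).lowerCentralSeries 2 ≠ ⊥)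
    (hcyc : IsCyclic (commutator G))
    (hidx : 2 < ((⊤ : Subgroup G).lowerCentralSeries 2).relIndex ((⊤ : Subgroup G).lowerCentralSeries 1)) :
    Nat.card (autC G) = Nat.card (commutator G) ^ 2 ∧
      autC G = (MulAut.conj : G →* MulAut G).range :=
  stmt_13_general hp hpG hgen hcyc hidx
end

section
/- Let G = ⟨x, y⟩ be a 2-generator finite p-group whose commutator subgroup γ₂(G) = ⟨u⟩ is cyclic of order p^r, and assume that either p is odd, or p = 2 and [u,G] ⊆ ⟨u⁴⟩. Then γ₂(G) = { [x, y^k] : 0 ≤ k < p^r }. -/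
/-!
Conjugation by `y` acts on `γ₂(G) = ⟨u⟩` as `u ↦ u ^ s` with `s ≡ 1 (mod p)`, and `s ≡ 1 (mod 4)`
when `p = 2`; writing `[x, y] = u ^ c`, one gets `[x, y ^ k] = u ^ (c (1 + s + ⋯ + s ^ (k - 1)))`.
Here `p ∤ c`: otherwise `G ⧸ ⟨u ^ p⟩` would be generated by two commuting elements, forcing
`γ₂(G) ≤ ⟨u ^ p⟩`.
By lifting the exponent, `p ^ j ∣ 1 + s + ⋯ + s ^ (k - 1)` iff `p ^ j ∣ k`, so the commutators
`[x, y ^ k]` with `k < p ^ r` are `p ^ r` distinct elements of `⟨u⟩`, hence all of it.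
-/

open Finset Subgroup
open scoped commutatorElement

theorem geom_sum_range_add {R : Type*} [Semiring R] (s : R) (b e : ℕ) :
    ∑ i ∈ range (b + e), s ^ i = ∑ i ∈ range b, s ^ i + s ^ b * ∑ i ∈ range e, s ^ i := by
  simp only [sum_range_add, mul_sum, pow_add]

theorem emultiplicity_geom_sum {p : ℕ} (hp : p.Prime) {s : ℤ} (hs : (p : ℤ) ∣ s - 1)
    (hs₂ : p = 2 → (4 : ℤ) ∣ s - 1) (m : ℕ) :
    emultiplicity (p : ℤ) (∑ i ∈ range m, s ^ i) = emultiplicity p m := by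
  rcases eq_or_ne s 1 with rfl | hs₁
  · simp [Int.natCast_emultiplicity]
  have hpZ := Nat.prime_iff_prime_int.1 hp
  have hps : ¬ (p : ℤ) ∣ s := fun h => hpZ.not_dvd_one (by simpa using dvd_sub h hs)
  have hfin : emultiplicity (p : ℤ) (s - 1) ≠ ⊤ :=
    finiteMultiplicity_iff_emultiplicity_ne_top.1
      (Int.finiteMultiplicity_iff.2 ⟨by simpa using hp.ne_one, sub_ne_zero.2 hs₁⟩)
  have hlte : emultiplicity (p : ℤ) (s ^ m - 1 ^ m) =
      emultiplicity (p : ℤ) (s - 1) + emultiplicity p m := by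
    rcases hp.eq_two_or_odd' with rfl | hodd
    · rw [← Int.natCast_emultiplicity]
      exact_mod_cast Int.two_pow_sub_pow' m (hs₂ rfl) (by exact_mod_cast hps)
    · exact Int.emultiplicity_pow_sub_pow hp hodd hs hps m
  rw [one_pow, ← geom_sum_mul, emultiplicity_mul hpZ, add_comm] at hlte
  exact WithTop.add_left_cancel hfin hlte

theorem pow_dvd_geom_sum_iff {p : ℕ} (hp : p.Prime) {s : ℤ} (hs : (p : ℤ) ∣ s - 1)
    (hs₂ : p = 2 → (4 : ℤ) ∣ s - 1) (j m : ℕ) :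
    (p : ℤ) ^ j ∣ ∑ i ∈ range m, s ^ i ↔ p ^ j ∣ m := by
  rw [pow_dvd_iff_le_emultiplicity, pow_dvd_iff_le_emultiplicity, emultiplicity_geom_sum hp hs hs₂]

theorem eq_of_mul_geom_sum_modEq {p r : ℕ} (hp : p.Prime) {s c : ℤ} (hs : (p : ℤ) ∣ s - 1)
    (hs₂ : p = 2 → (4 : ℤ) ∣ s - 1) (hc : ¬ (p : ℤ) ∣ c) {a b : ℕ} (ha : a < p ^ r)
    (hb : b < p ^ r)
    (h : c * ∑ i ∈ range a, s ^ i ≡ c * ∑ i ∈ range b, s ^ i [ZMOD p ^ r]) : a = b := by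
  wlog hba : b ≤ a generalizing a b
  · exact (this hb ha h.symm (by omega)).symm
  obtain ⟨e, rfl⟩ := Nat.exists_eq_add_of_le hba
  have hpZ := Nat.prime_iff_prime_int.1 hp
  have hps : ¬ (p : ℤ) ∣ s := fun h => hpZ.not_dvd_one (by simpa using dvd_sub h hs)
  have hdvd : (p : ℤ) ^ r ∣ c * (s ^ b * ∑ i ∈ range e, s ^ i) := by
    have := Int.modEq_iff_dvd.1 h.symm
    rwa [geom_sum_range_add, mul_add, add_sub_cancel_left] at this
  have hσ : (p : ℤ) ^ r ∣ ∑ i ∈ range e, s ^ i :=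
    ((hpZ.coprime_iff_not_dvd.2 hps).pow.dvd_of_dvd_mul_left
      ((hpZ.coprime_iff_not_dvd.2 hc).pow_left.dvd_of_dvd_mul_left hdvd))
  have he := Nat.eq_zero_of_dvd_of_lt ((pow_dvd_geom_sum_iff hp hs hs₂ r e).1 hσ) (by omega)
  omega

section Group

variable {G : Type*} [Group G]

theorem isMulCommutative_of_closure_pair_eq_top {a b : G} (hgen : closure {a, b} = ⊤)
    (hab : a * b = b * a) : IsMulCommutative G := by
  have hcomm : ∀ g ∈ ({a, b} : Set G), ∀ h ∈ ({a, b} : Set G), g * h = h * g := by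
    rintro g (rfl | rfl) h (rfl | rfl) <;> first | rfl | exact hab | exact hab.symm
  have hle := closure_le_centralizer_centralizer ({a, b} : Set G)
  rw [hgen] at hle
  exact ⟨⟨fun g h =>
    Set.centralizer_centralizer_comm_of_comm hcomm g (hle trivial) h (hle trivial)⟩⟩

theorem commutator_le_of_closure_pair_eq_top {x y : G} (hgen : closure {x, y} = ⊤)
    {N : Subgroup G} [N.Normal] (hxy : x⁻¹ * y⁻¹ * x * y ∈ N) : commutator G ≤ N := by
  rw [← Normal.quotient_commutative_iff_commutator_le]
  have hgenQ : closure {(x : G ⧸ N), (y : G ⧸ N)} = ⊤ := by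
    rw [← Set.image_pair]
    change closure (QuotientGroup.mk' N '' {x, y}) = ⊤
    rw [← MonoidHom.map_closure, hgen]
    exact map_top_of_surjective _ (QuotientGroup.mk'_surjective N)
  refine isMulCommutative_of_closure_pair_eq_top hgenQ ?_
  have h : (x : G ⧸ N)⁻¹ * (y : G ⧸ N)⁻¹ * x * y = 1 := (QuotientGroup.eq_one_iff _).2 hxy
  calc (x : G ⧸ N) * y = y * x * ((x : G ⧸ N)⁻¹ * (y : G ⧸ N)⁻¹ * x * y) := by group
    _ = y * x := by rw [h, mul_one]

theorem inv_mul_zpow_mul (y u : G) (n : ℤ) : y⁻¹ * u ^ n * y = (y⁻¹ * u * y) ^ n := by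
  simpa using (conj_zpow (a := y⁻¹) (b := u) (i := n)).symm

theorem Subgroup.Normal.zpowers_pow {u : G} (hN : (zpowers u).Normal) (n : ℕ) :
    (zpowers (u ^ n)).Normal := by
  refine ⟨fun v hv g => ?_⟩
  obtain ⟨t, rfl⟩ := mem_zpowers_iff.1 hv
  obtain ⟨m, hm⟩ := mem_zpowers_iff.1 (hN.conj_mem u (mem_zpowers u) g)
  refine mem_zpowers_iff.2 ⟨m * t, ?_⟩
  rw [← conj_zpow, ← conj_pow, ← hm, ← zpow_natCast, ← zpow_natCast, ← zpow_mul, ← zpow_mul,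
    ← zpow_mul]
  congr 1
  ring

variable {u y : G} {s : ℤ}

theorem pow_inv_mul_zpow_mul_pow (hs : y⁻¹ * u * y = u ^ s) (k : ℕ) (n : ℤ) :
    (y ^ k)⁻¹ * u ^ n * y ^ k = u ^ (s ^ k * n) := by
  induction k generalizing n with
  | zero => simp
  | succ k ih =>
    rw [pow_succ, mul_inv_rev, show y⁻¹ * (y ^ k)⁻¹ * u ^ n * (y ^ k * y) =
      y⁻¹ * ((y ^ k)⁻¹ * u ^ n * y ^ k) * y by group, ih, inv_mul_zpow_mul, hs, ← zpow_mul,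
      pow_succ]
    ring_nf

theorem commutator_pow_eq_zpow_geom_sum {x : G} {c : ℤ} (hc : x⁻¹ * y⁻¹ * x * y = u ^ c)
    (hs : y⁻¹ * u * y = u ^ s) (k : ℕ) :
    x⁻¹ * (y ^ k)⁻¹ * x * y ^ k = u ^ (c * ∑ i ∈ range k, s ^ i) := by
  induction k with
  | zero => simp
  | succ k ih =>
    rw [show x⁻¹ * (y ^ (k + 1))⁻¹ * x * y ^ (k + 1) =
      (x⁻¹ * (y ^ k)⁻¹ * x * y ^ k) * ((y ^ k)⁻¹ * (x⁻¹ * y⁻¹ * x * y) * y ^ k) by group,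
      ih, hc, pow_inv_mul_zpow_mul_pow hs, ← zpow_add, sum_range_succ]
    ring_nf

theorem dvd_sub_one_of_inv_mul_mul_eq_zpow {p : ℕ} [Fact p.Prime] (hpG : IsPGroup p G)
    (hu : p ∣ orderOf u) (hs : y⁻¹ * u * y = u ^ s) : (p : ℤ) ∣ s - 1 := by
  obtain ⟨n, hn⟩ := hpG y
  have hfix : u ^ (s ^ p ^ n - 1) = 1 := by
    have := pow_inv_mul_zpow_mul_pow hs (p ^ n) 1
    simp only [hn, inv_one, one_mul, mul_one, zpow_one] at this
    rw [zpow_sub, zpow_one, ← this, mul_inv_cancel]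
  have hdvd : (p : ℤ) ∣ s ^ p ^ n - 1 :=
    (Int.natCast_dvd_natCast.2 hu).trans (orderOf_dvd_iff_zpow_eq_one.2 hfix)
  rw [← ZMod.intCast_eq_intCast_iff_dvd_sub] at hdvd ⊢
  simpa [ZMod.pow_card_pow] using hdvd

theorem exists_inv_mul_mul_eq_zpow_one_add_mul {n : ℕ}
    (h : u⁻¹ * y⁻¹ * u * y ∈ zpowers (u ^ n)) : ∃ t : ℤ, y⁻¹ * u * y = u ^ (1 + n * t) := by
  obtain ⟨t, ht⟩ := mem_zpowers_iff.1 h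
  refine ⟨t, ?_⟩
  rw [zpow_add, zpow_one, zpow_mul, zpow_natCast, ht]
  group

theorem exists_inv_mul_mul_eq_zpow_of_odd_or_two {p : ℕ} (hp : p.Prime) (hpG : IsPGroup p G)
    (hN : (zpowers u).Normal) (hu : p ∣ orderOf u)
    (hcase : Odd p ∨ (p = 2 ∧ u⁻¹ * y⁻¹ * u * y ∈ zpowers (u ^ 4))) :
    ∃ s : ℤ, y⁻¹ * u * y = u ^ s ∧ (p : ℤ) ∣ s - 1 ∧ (p = 2 → (4 : ℤ) ∣ s - 1) := by
  rcases hcase with hodd | ⟨rfl, h4⟩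
  · obtain ⟨s, hs⟩ := mem_zpowers_iff.1 (hN.conj_mem u (mem_zpowers u) y⁻¹)
    have := Fact.mk hp
    refine ⟨s, by simpa using hs.symm, ?_, by rintro rfl; norm_num at hodd⟩
    exact dvd_sub_one_of_inv_mul_mul_eq_zpow hpG hu (by simpa using hs.symm)
  · -- `s` is only determined modulo `orderOf u`; the hypothesis yields a representative
    -- `≡ 1 (mod 4)`.
    obtain ⟨t, ht⟩ := exists_inv_mul_mul_eq_zpow_one_add_mul h4
    exact ⟨1 + 4 * t, ht, ⟨2 * t, by push_cast; ring⟩, fun _ => ⟨t, by ring⟩⟩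

theorem not_dvd_of_commutator_eq_zpowers {p : ℕ} (hp : p.Prime) {x : G}
    (hgen : closure {x, y} = ⊤) (hcomm : commutator G = zpowers u) (hu : p ∣ orderOf u)
    {c : ℤ} (hc : x⁻¹ * y⁻¹ * x * y = u ^ c) : ¬ (p : ℤ) ∣ c := by
  rintro ⟨c, rfl⟩
  have : (zpowers (u ^ p)).Normal :=
    (hcomm ▸ commutator_normal ⊤ ⊤ : (zpowers u).Normal).zpowers_pow p
  have hle := commutator_le_of_closure_pair_eq_top hgen (N := zpowers (u ^ p))
    (hc ▸ mem_zpowers_iff.2 ⟨c, by rw [← zpow_natCast, ← zpow_mul]⟩)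
  obtain ⟨t, ht⟩ := mem_zpowers_iff.1 (hle (hcomm ▸ mem_zpowers u))
  have hdvd : (p : ℤ) ∣ p * t - 1 := (Int.natCast_dvd_natCast.2 hu).trans
    (orderOf_dvd_iff_zpow_eq_one.2 (by rw [zpow_sub, zpow_mul, zpow_natCast, ht]; group))
  exact (Nat.prime_iff_prime_int.1 hp).not_dvd_one
    (by simpa using dvd_sub (dvd_mul_right _ t) hdvd)

end Group

/-- Cheng's lemma: if `G = ⟨x,y⟩` is a 2-generator finite p-group with cyclic commutator
subgroup `γ₂(G) = ⟨u⟩` of order `p^r`, and either `p` is odd or `p = 2` and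
`[u,G] ⊆ ⟨u⁴⟩`, then `γ₂(G) = {[x, y^k] : 0 ≤ k < p^r}`. -/
theorem stmt_14 {p r : ℕ} {G : Type*} [Group G] [Finite G] (hp : p.Prime) (hpG : IsPGroup p G)
    (x y u : G) (hgen : Subgroup.closure {x, y} = ⊤)
    (hcomm : commutator G = Subgroup.zpowers u) (hr : 0 < r) (hord : orderOf u = p ^ r)
    (hcase : Odd p ∨ (p = 2 ∧ ∀ g : G, u⁻¹ * g⁻¹ * u * g ∈ Subgroup.zpowers (u ^ 4))) :
    (commutator G : Set G) =
      {z : G | ∃ k : ℕ, k < p ^ r ∧ z = x⁻¹ * (y ^ k)⁻¹ * x * y ^ k} := by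
  have hu : p ∣ orderOf u := hord ▸ dvd_pow_self p hr.ne'
  obtain ⟨c, hc⟩ : ∃ c : ℤ, x⁻¹ * y⁻¹ * x * y = u ^ c := by
    have hmem : ⁅x⁻¹, y⁻¹⁆ ∈ zpowers u := hcomm ▸ commutator_mem_commutator trivial trivial
    simpa [commutatorElement_def, eq_comm, mem_zpowers_iff] using hmem
  obtain ⟨s, hs, hs₁, hs₂⟩ := exists_inv_mul_mul_eq_zpow_of_odd_or_two hp hpG
    (hcomm ▸ commutator_normal ⊤ ⊤) hu (hcase.imp_right fun h => ⟨h.1, h.2 y⟩)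
  have hform := commutator_pow_eq_zpow_geom_sum hc hs
  have hinj : Set.InjOn (fun k : ℕ => x⁻¹ * (y ^ k)⁻¹ * x * y ^ k) (Set.Iio (p ^ r)) :=
    fun a ha b hb hab => eq_of_mul_geom_sum_modEq hp hs₁ hs₂
      (not_dvd_of_commutator_eq_zpowers hp hgen hcomm hu hc) ha hb
      (by simpa [hform, zpow_eq_zpow_iff_modEq, hord] using hab)
  have himage : {z : G | ∃ k : ℕ, k < p ^ r ∧ z = x⁻¹ * (y ^ k)⁻¹ * x * y ^ k} =
      (fun k : ℕ => x⁻¹ * (y ^ k)⁻¹ * x * y ^ k) '' Set.Iio (p ^ r) := by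
    ext; simp [eq_comm]
  rw [himage, eq_comm]
  refine Set.eq_of_subset_of_ncard_le ?_ ?_ (Set.toFinite _)
  · rintro _ ⟨k, -, rfl⟩
    simp only [SetLike.mem_coe, hcomm, hform]
    exact zpow_mem (mem_zpowers u) _
  · rw [hinj.ncard_image, hcomm, ← Nat.card_coe_set_eq]
    simp [hord]
end

section
/- Let p be a prime and let A₁, …, A_n be strongly skew-symmetric m×m matrices over F_p such that every nontrivial F_p-linear combination ψ₁A₁ + ⋯ + ψ_nA_n (with not all ψ_i zero) is nonsingular, with n ≥ 1. Then m is even and m ≥ 2n. -/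
/-!
The determinant `D` of the pencil `∑ₖ Xₖ • Aₖ` is a form of degree `m` in `n` variables over
`𝔽_p` whose only zero is `0`. Over a field the determinant of an alternating matrix is a square
(split off a nonzero `2 × 2` block and pass to its Schur complement, which is again alternating);
since `MvPolynomial` is integrally closed, `D = g²` for a polynomial `g`, which is then a form of
degree `m / 2`, so `m` is even. Again `0` is the only zero of `g`, so by Chevalley–Warning `n`
cannot exceed `deg g`: otherwise `p` would divide the number of zeros of `g`, which is `1`.
-/

namespace Matrix

variable {ι κ R : Type*}

/-- The paper's *strongly skew-symmetric*: in characteristic `2` the zero diagonal does not follow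
from skew-symmetry. -/
structure IsAlternating [Neg R] [Zero R] (M : Matrix ι ι R) : Prop where
  apply_swap : ∀ i j, M j i = -M i j
  apply_self : ∀ i, M i i = 0

namespace IsAlternating

theorem map [Ring R] {S : Type*} [Ring S] {M : Matrix ι ι R} (hM : M.IsAlternating)
    (f : R →+* S) : (M.map f).IsAlternating where
  apply_swap i j := by simp [hM.apply_swap i j]
  apply_self i := by simp [hM.apply_self i]

theorem submatrix [Neg R] [Zero R] {M : Matrix ι ι R} (hM : M.IsAlternating) (e : κ → ι) :
    (M.submatrix e e).IsAlternating where
  apply_swap i j := hM.apply_swap (e i) (e j)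
  apply_self i := hM.apply_self (e i)

theorem add [SubtractionCommMonoid R] {M N : Matrix ι ι R} (hM : M.IsAlternating)
    (hN : N.IsAlternating) : (M + N).IsAlternating where
  apply_swap i j := by simp [hM.apply_swap i j, hN.apply_swap i j, add_comm]
  apply_self i := by simp [hM.apply_self i, hN.apply_self i]

theorem transpose_eq_neg [Neg R] [Zero R] {M : Matrix ι ι R} (hM : M.IsAlternating) :
    Mᵀ = -M :=
  ext fun i j => hM.apply_swap i j

variable [Fintype ι] [CommRing R]

theorem dotProduct_mulVec_self {M : Matrix ι ι R} (hM : M.IsAlternating) (x : ι → R) :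
    x ⬝ᵥ M *ᵥ x = 0 := by
  have : x ⬝ᵥ M *ᵥ x = ∑ ij : ι × ι, x ij.1 * M ij.1 ij.2 * x ij.2 := by
    simp only [dotProduct, mulVec, Finset.mul_sum, Fintype.sum_prod_type, mul_assoc]
  rw [this]
  refine Finset.sum_ninvolution Prod.swap (fun ij => ?_) (fun ij hij hswap => hij ?_)
    (fun _ => Finset.mem_univ _) Prod.swap_swap
  · simp only [Prod.fst_swap, Prod.snd_swap, hM.apply_swap ij.1 ij.2]
    ring
  · obtain ⟨i, j⟩ := ij
    obtain rfl : j = i := congrArg Prod.fst hswap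
    simp [hM.apply_self]

theorem transpose_mul_mul {M : Matrix ι ι R} (hM : M.IsAlternating) (B : Matrix ι κ R) :
    (Bᵀ * M * B).IsAlternating where
  apply_swap i j := by
    have h : (Bᵀ * M * B)ᵀ = -(Bᵀ * M * B) := by
      rw [transpose_mul, transpose_mul, transpose_transpose, hM.transpose_eq_neg,
        Matrix.neg_mul, Matrix.mul_neg, Matrix.mul_assoc]
    exact congrFun (congrFun h i) j
  apply_self i := by
    rw [← hM.dotProduct_mulVec_self (fun a => B a i)]
    simp only [mul_apply, dotProduct, mulVec, transpose_apply, Finset.sum_mul, Finset.mul_sum]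
    rw [Finset.sum_comm]
    exact Finset.sum_congr rfl fun _ _ => Finset.sum_congr rfl fun _ _ => by ring

section Field

variable {F : Type*} [Field F]

theorem exists_det_eq_sq_mul_det [Fintype κ] [DecidableEq κ]
    {M : Matrix (Fin 2 ⊕ κ) (Fin 2 ⊕ κ) F} (hM : M.IsAlternating) (hc : M (.inl 0) (.inl 1) ≠ 0) :
    ∃ N : Matrix κ κ F, N.IsAlternating ∧ M.det = M (.inl 0) (.inl 1) ^ 2 * N.det := by
  set c := M (.inl 0) (.inl 1)
  have hA : M.toBlocks₁₁ = !![0, c; -c, 0] := by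
    ext i j
    fin_cases i <;> fin_cases j <;> simp [c, toBlocks₁₁, hM.apply_self, hM.apply_swap (.inl 0)]
  have hC : M.toBlocks₂₁ = -M.toBlocks₁₂ᵀ := by
    ext i j; simp [toBlocks₁₂, toBlocks₂₁, hM.apply_swap (.inl j)]
  let J : Matrix (Fin 2) (Fin 2) F := !![0, -c⁻¹; c⁻¹, 0]
  have hJ : J.IsAlternating :=
    ⟨fun i j => by fin_cases i <;> fin_cases j <;> simp [J], fun i => by fin_cases i <;> simp [J]⟩
  let _ : Invertible M.toBlocks₁₁ :=
    ⟨J, by rw [hA]; ext i j; fin_cases i <;> fin_cases j <;> simp [J, hc],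
      by rw [hA]; ext i j; fin_cases i <;> fin_cases j <;> simp [J, hc]⟩
  refine ⟨M.toBlocks₂₂ + M.toBlocks₁₂ᵀ * J * M.toBlocks₁₂,
    (hM.submatrix Sum.inr).add (hJ.transpose_mul_mul _), ?_⟩
  have hdetA : M.toBlocks₁₁.det = c ^ 2 := by rw [hA, det_fin_two_of]; ring
  conv_lhs => rw [← fromBlocks_toBlocks M, det_fromBlocks₁₁, hdetA, hC]
  simp only [Matrix.neg_mul, sub_neg_eq_add]
  rfl

theorem isSquare_det : ∀ {m : ℕ} {M : Matrix (Fin m) (Fin m) F}, M.IsAlternating →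
    IsSquare M.det
  | 0, _, _ => ⟨1, by simp⟩
  | 1, M, hM => ⟨0, by simp [det_unique, hM.apply_self]⟩
  | k + 2, M, hM => by
    by_cases hrow : ∀ j, M 0 j = 0
    · exact ⟨0, by simp [det_eq_zero_of_row_eq_zero 0 hrow]⟩
    push Not at hrow
    obtain ⟨j, hj⟩ := hrow
    have hj0 : j ≠ 0 := by rintro rfl; exact hj (hM.apply_self 0)
    let e : Fin 2 ⊕ Fin k ≃ Fin (k + 2) :=
      (finSumFinEquiv.trans (finCongr (Nat.add_comm 2 k))).trans (Equiv.swap 1 j)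
    have he0 : e (.inl 0) = 0 := Equiv.swap_apply_of_ne_of_ne (a := 1) (x := 0) (by simp) hj0.symm
    have he1 : e (.inl 1) = j := Equiv.swap_apply_left 1 j
    obtain ⟨N, hN, hdet⟩ :=
      (hM.submatrix e).exists_det_eq_sq_mul_det (by simpa [he0, he1] using hj)
    obtain ⟨d, hd⟩ := hN.isSquare_det
    rw [← det_submatrix_equiv_self e, hdet, hd]
    exact ⟨M 0 j * d, by simp only [submatrix_apply, he0, he1]; ring⟩

end Field

theorem isSquare_det_of_isIntegrallyClosed {R : Type*} [CommRing R] [IsDomain R]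
    [IsIntegrallyClosed R] {m : ℕ} {M : Matrix (Fin m) (Fin m) R} (hM : M.IsAlternating) :
    IsSquare M.det := by
  obtain ⟨d, hd⟩ := (hM.map (algebraMap R (FractionRing R))).isSquare_det
  rw [← RingHom.mapMatrix_apply, ← RingHom.map_det] at hd
  obtain ⟨g, rfl⟩ := IsIntegrallyClosed.exists_algebraMap_eq_of_isIntegral_pow (x := d) two_pos
    (by rw [sq, ← hd]; exact isIntegral_algebraMap)
  exact ⟨g, IsFractionRing.injective R (FractionRing R) (by rw [hd, map_mul])⟩

end IsAlternating
end Matrix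

namespace MvPolynomial

variable {ι κ R : Type*} [Fintype ι] [CommRing R]

noncomputable def linearPencil (A : ι → Matrix κ κ R) : Matrix κ κ (MvPolynomial ι R) :=
  Matrix.of fun i j => ∑ k, C (A k i j) * X k

theorem linearPencil_map_eval (A : ι → Matrix κ κ R) (ψ : ι → R) :
    (linearPencil A).map (eval ψ) = ∑ k, ψ k • A k := by
  ext i j
  simp [linearPencil, Matrix.sum_apply, mul_comm]

theorem eval_det_linearPencil [Fintype κ] [DecidableEq κ] (A : ι → Matrix κ κ R) (ψ : ι → R) :
    eval ψ (linearPencil A).det = (∑ k, ψ k • A k).det := by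
  rw [RingHom.map_det, RingHom.mapMatrix_apply, linearPencil_map_eval]

theorem isHomogeneous_linearPencil_apply (A : ι → Matrix κ κ R) (i j : κ) :
    (linearPencil A i j).IsHomogeneous 1 :=
  IsHomogeneous.sum _ _ _ fun k _ => isHomogeneous_C_mul_X _ k

theorem _root_.Matrix.IsAlternating.linearPencil {A : ι → Matrix κ κ R}
    (hA : ∀ k, (A k).IsAlternating) : (linearPencil A).IsAlternating where
  apply_swap i j := by simp [MvPolynomial.linearPencil, (hA _).apply_swap i j]
  apply_self i := by simp [MvPolynomial.linearPencil, (hA _).apply_self i]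

theorem isHomogeneous_det {σ : Type*} [Fintype κ] [DecidableEq κ]
    {M : Matrix κ κ (MvPolynomial σ R)} (hM : ∀ i j, (M i j).IsHomogeneous 1) :
    M.det.IsHomogeneous (Fintype.card κ) := by
  rw [Matrix.det_apply]
  refine IsHomogeneous.sum _ _ _ fun e _ => ?_
  have hprod : (∏ i, M (e i) i).IsHomogeneous (Fintype.card κ) := by
    have := IsHomogeneous.prod Finset.univ _ (fun _ => 1) fun i _ => hM (e i) i
    rwa [Finset.sum_const, smul_eq_mul, mul_one, Finset.card_univ] at this
  rcases Int.units_eq_one_or (Equiv.Perm.sign e) with h | h <;> rw [h]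
  · simpa using hprod
  · simpa using hprod.neg

theorem card_le_totalDegree_of_eval_eq_zero_iff {K σ : Type*} [Fintype K] [Field K] [Fintype σ]
    [DecidableEq σ] {f : MvPolynomial σ K} (hf : ∀ x, eval x f = 0 ↔ x = 0) :
    Fintype.card σ ≤ f.totalDegree := by
  classical
  by_contra! hlt
  have hdvd := char_dvd_card_solutions (ringChar K) hlt
  have hcard : Fintype.card { x : σ → K // eval x f = 0 } = 1 :=
    Fintype.card_eq_one_iff.2 ⟨⟨0, (hf 0).2 rfl⟩, fun x => Subtype.ext ((hf x).1 x.2)⟩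
  rw [hcard, Nat.dvd_one] at hdvd
  exact CharP.ringChar_ne_one hdvd

end MvPolynomial

open MvPolynomial

/-- If `A 1, …, A n` (`n ≥ 1`) are strongly skew-symmetric `m × m` matrices (`m ≥ 1`)
over `F_p` such that every nontrivial linear combination `∑ ψ k • A k` is nonsingular,
then `m` is even and `m ≥ 2n`. -/
theorem stmt_15 {p : ℕ} [Fact p.Prime] {m n : ℕ} (hm : 0 < m) (hn : 1 ≤ n)
    (A : Fin n → Matrix (Fin m) (Fin m) (ZMod p))
    (hskew : ∀ k, ∀ i j : Fin m, i ≠ j → A k i j = - A k j i)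
    (hdiag : ∀ k, ∀ i : Fin m, A k i i = 0)
    (hns : ∀ ψ : Fin n → ZMod p, ψ ≠ 0 → IsUnit (∑ k, ψ k • A k).det) :
    Even m ∧ 2 * n ≤ m := by
  have hA : ∀ k, (A k).IsAlternating := fun k =>
    ⟨fun i j => by
      obtain rfl | hij := eq_or_ne i j
      · simp [hdiag]
      · exact hskew k j i hij.symm, hdiag k⟩
  have hdet_eq_zero : ∀ ψ, eval ψ (linearPencil A).det = 0 ↔ ψ = 0 := fun ψ => by
    rw [eval_det_linearPencil]
    refine ⟨fun h => by_contra fun hψ => (hns ψ hψ).ne_zero h, ?_⟩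
    rintro rfl
    have : Nonempty (Fin m) := ⟨⟨0, hm⟩⟩
    simp
  have hdet_ne : (linearPencil A).det ≠ 0 := fun h =>
    one_ne_zero (congrFun ((hdet_eq_zero 1).1 (by rw [h, map_zero])) ⟨0, hn⟩)
  obtain ⟨g, hg⟩ := (Matrix.IsAlternating.linearPencil hA).isSquare_det_of_isIntegrallyClosed
  have hg_ne : g ≠ 0 := by rintro rfl; exact hdet_ne (by rw [hg, mul_zero])
  have hdeg : g.totalDegree + g.totalDegree = m := by
    rw [← totalDegree_mul_of_isDomain hg_ne hg_ne, ← hg,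
      (isHomogeneous_det (isHomogeneous_linearPencil_apply A)).totalDegree hdet_ne,
      Fintype.card_fin]
  have hn_le := card_le_totalDegree_of_eval_eq_zero_iff (f := g) fun ψ => by
    rw [← hdet_eq_zero ψ, hg, map_mul, mul_self_eq_zero]
  rw [Fintype.card_fin] at hn_le
  exact ⟨⟨_, hdeg.symm⟩, by omega⟩
end

section
/- Let L̄ = L̄₁ ⊕ L̄₂ ⊕ L̄₃ be a graded Lie algebra over F_p of nilpotency class 3 satisfying dim L̄₃ = 1, [L̄_i, L̄₁] = L̄_{i+1} for i = 1, 2, [x̄, x̄] = 0 for all x̄, and [L̄₁, ȳ] = L̄₂ for every nonzero ȳ ∈ L̄₁. Let C̄ = { ȳ ∈ L̄₁ : [L̄₂, ȳ] = 0 }. If x̄ ∈ L̄₁ − C̄ and ȳ ∈ C̄ − {0}, then [x̄, ȳ] ≠ 0. -/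
/-!
By surjectivity every element of `L̄₂` has the form `[z̄, ȳ]`, and the Jacobi identity for
`z̄, ȳ, x̄` gives `[[z̄, ȳ], x̄] = -[[ȳ, x̄], z̄] - [[x̄, z̄], ȳ]`. If `[x̄, ȳ] = 0` then also
`[ȳ, x̄] = 0`, and `[[x̄, z̄], ȳ] = 0` because `ȳ ∈ C̄`; so `[L̄₂, x̄] = 0`, i.e. `x̄ ∈ C̄`.
-/

section

variable {R V1 V2 V3 : Type*} [CommRing R]
  [AddCommGroup V1] [Module R V1] [AddCommGroup V2] [Module R V2]
  [AddCommGroup V3] [Module R V3]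
  {b11 : V1 →ₗ[R] V1 →ₗ[R] V2} {b21 : V2 →ₗ[R] V1 →ₗ[R] V3}

theorem apply_bracket_eq_zero_of_bracket_eq_zero (halt : b11.IsAlt)
    (hjac : ∀ x y z : V1, b21 (b11 x y) z + b21 (b11 y z) x + b21 (b11 z x) y = 0)
    {x y : V1} (hxy : b11 x y = 0) (hy : ∀ u : V2, b21 u y = 0) (z : V1) :
    b21 (b11 z y) x = 0 := by
  have hyx : b11 y x = 0 := halt.eq_iff.mp hxy
  simpa only [hyx, hy, map_zero, LinearMap.zero_apply, add_zero] using hjac z y x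

end

theorem stmt_16_general {p : ℕ}
    {V1 V2 V3 : Type*}
    [AddCommGroup V1] [Module (ZMod p) V1] [AddCommGroup V2] [Module (ZMod p) V2]
    [AddCommGroup V3] [Module (ZMod p) V3]
    (b11 : V1 →ₗ[ZMod p] V1 →ₗ[ZMod p] V2)
    (b21 : V2 →ₗ[ZMod p] V1 →ₗ[ZMod p] V3)
    (halt : ∀ x : V1, b11 x x = 0)
    (hjac : ∀ x y z : V1, b21 (b11 x y) z + b21 (b11 y z) x + b21 (b11 z x) y = 0)
    (hsurj : ∀ y : V1, y ≠ 0 → Function.Surjective fun x : V1 => b11 x y) :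
    ∀ x : V1, (¬ ∀ u : V2, b21 u x = 0) →
      ∀ y : V1, (∀ u : V2, b21 u y = 0) → y ≠ 0 → b11 x y ≠ 0 := by
  intro x hx y hy hy0 hxy
  refine hx fun u => ?_
  obtain ⟨z, rfl⟩ := hsurj y hy0 u
  exact apply_bracket_eq_zero_of_bracket_eq_zero halt hjac hxy hy z

/-- In a graded Lie algebra `L̄ = L̄₁ ⊕ L̄₂ ⊕ L̄₃` over `F_p` of class 3 (encoded by its
bracket maps `b11 : L̄₁ × L̄₁ → L̄₂` and `b21 : L̄₂ × L̄₁ → L̄₃`) with `dim L̄₃ = 1`,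
`[L̄₁,L̄₁] = L̄₂`, `[L̄₂,L̄₁] = L̄₃`, `[x̄,x̄] = 0`, and `[L̄₁,ȳ] = L̄₂` for every nonzero
`ȳ ∈ L̄₁`: if `x̄ ∈ L̄₁ − C̄` and `ȳ ∈ C̄ − {0}`, where
`C̄ = {ȳ ∈ L̄₁ : [L̄₂,ȳ] = 0}`, then `[x̄,ȳ] ≠ 0`. -/
theorem stmt_16 {p : ℕ} [Fact p.Prime]
    {V1 V2 V3 : Type*}
    [AddCommGroup V1] [Module (ZMod p) V1] [AddCommGroup V2] [Module (ZMod p) V2]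
    [AddCommGroup V3] [Module (ZMod p) V3]
    [FiniteDimensional (ZMod p) V1] [FiniteDimensional (ZMod p) V2]
    [FiniteDimensional (ZMod p) V3]
    (b11 : V1 →ₗ[ZMod p] V1 →ₗ[ZMod p] V2)
    (b21 : V2 →ₗ[ZMod p] V1 →ₗ[ZMod p] V3)
    (halt : ∀ x : V1, b11 x x = 0)
    (hjac : ∀ x y z : V1, b21 (b11 x y) z + b21 (b11 y z) x + b21 (b11 z x) y = 0)
    (hdim3 : Module.finrank (ZMod p) V3 = 1)
    (hL2 : Submodule.span (ZMod p) {w : V2 | ∃ x y : V1, w = b11 x y} = ⊤)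
    (hL3 : Submodule.span (ZMod p) {w : V3 | ∃ u : V2, ∃ y : V1, w = b21 u y} = ⊤)
    (hsurj : ∀ y : V1, y ≠ 0 → Function.Surjective fun x : V1 => b11 x y) :
    ∀ x : V1, (¬ ∀ u : V2, b21 u x = 0) →
      ∀ y : V1, (∀ u : V2, b21 u y = 0) → y ≠ 0 → b11 x y ≠ 0 :=
  stmt_16_general b11 b21 halt hjac hsurj
end
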